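/- arXiv:2303.12850 — 6 statements merged into one kernel-verified Lean document; each statement's English description precedes it below -/
import Mathlib

section
/- Let G=(V,E) be a finite undirected graph. A 0-1 integer vector x ∈ {0,1}^V lies in the orientation polyhedron projection Q_orient(G) if and only if the set S = {u ∈ V : x_u = 1} is a pseudoforest deletion set of G, i.e., the graph G − S is a pseudoforest. -/
/- Common definitions for the polyhedral study of FVS / PFDS. -/

open scoped Classical
open Finset

namespace FVS

noncomputable section

variable {V : Type*}

/-- Degree of `u` in the subgraph of `G` induced on the vertex set `S`. -/
def degIn [Fintype V] (G : SimpleGraph V) (S : Finset V) (u : V) : ℕ :=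
  (S.filter fun v => G.Adj u v).card

/-- Number of edges of `G` with both endpoints in `S`, i.e. `|E[S]|`. -/
def edgesIn [Fintype V] (G : SimpleGraph V) (S : Finset V) : ℕ :=
  (G.edgeFinset.filter fun e => ∀ v ∈ e, v ∈ S).card

/-- A finite graph is a pseudoforest if each connected component has at most as many
edges as vertices. -/
def IsPseudoforest {W : Type*} [Fintype W] (H : SimpleGraph W) : Prop :=
  ∀ C : H.ConnectedComponent,
    (H.edgeFinset.filter fun e => ∀ v ∈ e, H.connectedComponentMk v = C).card ≤
      (Finset.univ.filter fun v => H.connectedComponentMk v = C).card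

/-- `U` is a pseudoforest deletion set for `G`: `G - U` is a pseudoforest. -/
def IsPFDS [Fintype V] (G : SimpleGraph V) (U : Finset V) : Prop :=
  IsPseudoforest (G.induce {v : V | v ∉ U})

/-- `F` is a feedback vertex set for `G`: `G - F` is acyclic. -/
def IsFVS [Fintype V] (G : SimpleGraph V) (F : Finset V) : Prop :=
  (G.induce {v : V | v ∉ F}).IsAcyclic

/-- Membership in the orientation polyhedron `P_orient(G)`: for every edge `e = uv`,
`x_u + x_v + y_{e,u} + y_{e,v} ≥ 1`; for every vertex `u`,
`x_u + Σ_{e ∈ δ(u)} y_{e,u} ≤ 1`; and all variables are nonnegative.  The variables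
`y e u` for pairs `(e, u)` where `e` is not an edge of `G` or `u` is not an endpoint
of `e` do not occur in the formulation and are pinned to `0`. -/
def POrient [Fintype V] (G : SimpleGraph V) (x : V → ℝ) (y : Sym2 V → V → ℝ) : Prop :=
  (∀ u v, G.Adj u v → 1 ≤ x u + x v + y s(u, v) u + y s(u, v) v) ∧
  (∀ u, x u + ∑ e ∈ G.edgeFinset.filter (fun e => u ∈ e), y e u ≤ 1) ∧
  (∀ u, 0 ≤ x u) ∧
  (∀ e u, 0 ≤ y e u) ∧
  (∀ e u, ¬ (e ∈ G.edgeSet ∧ u ∈ e) → y e u = 0)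

/-- Membership in `Q_orient(G)`, the projection of `P_orient(G)` to the `x`-variables. -/
def QOrient [Fintype V] (G : SimpleGraph V) (x : V → ℝ) : Prop :=
  ∃ y : Sym2 V → V → ℝ, POrient G x y

/-- Membership in the weak density polyhedron `P_WD(G)`:
`x ≥ 0` and `Σ_{u ∈ S} (d_S(u) - 1) x_u ≥ |E[S]| - |S|` for every `S ⊆ V`. -/
def PWD [Fintype V] (G : SimpleGraph V) (x : V → ℝ) : Prop :=
  (∀ u, 0 ≤ x u) ∧
  ∀ S : Finset V, (edgesIn G S : ℝ) - S.card ≤ ∑ u ∈ S, ((degIn G S u : ℝ) - 1) * x u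

/-- Membership in the strong density polyhedron `P_SD(G)`:
`x ≥ 0` and `Σ_{u ∈ S} (d_S(u) - 1) x_u ≥ |E[S]| - |S| + 1` whenever `E[S] ≠ ∅`. -/
def PSD [Fintype V] (G : SimpleGraph V) (x : V → ℝ) : Prop :=
  (∀ u, 0 ≤ x u) ∧
  ∀ S : Finset V, edgesIn G S ≠ 0 →
    (edgesIn G S : ℝ) - S.card + 1 ≤ ∑ u ∈ S, ((degIn G S u : ℝ) - 1) * x u

/-- The induced subgraph `G[U]` is a cycle: it is connected and `2`-regular. -/
def IsInducedCycle [Fintype V] (G : SimpleGraph V) (U : Finset V) : Prop :=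
  (G.induce (U : Set V)).Connected ∧ ∀ u ∈ U, degIn G U u = 2

/-- Membership in the cycle cover polyhedron `P_cycle-cover(G)`. -/
def PCycleCover [Fintype V] (G : SimpleGraph V) (x : V → ℝ) : Prop :=
  (∀ u, 0 ≤ x u) ∧ ∀ U : Finset V, IsInducedCycle G U → 1 ≤ ∑ u ∈ U, x u

/-- The induced subgraph `G[U]` is a `2`-pseudotree: connected with at least `|U| + 1` edges. -/
def Is2PseudotreeInduced [Fintype V] (G : SimpleGraph V) (U : Finset V) : Prop :=
  (G.induce (U : Set V)).Connected ∧ U.card + 1 ≤ edgesIn G U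

/-- Membership in the `2`-pseudotree cover polyhedron `P_2PT-cover(G)`. -/
def P2PTCover [Fintype V] (G : SimpleGraph V) (x : V → ℝ) : Prop :=
  (∀ u, 0 ≤ x u) ∧ ∀ U : Finset V, Is2PseudotreeInduced G U → 1 ≤ ∑ u ∈ U, x u

/-- `(x, y)` is an extreme point of `P_orient(G)`: it is feasible and is not a proper
convex combination of two distinct points of `P_orient(G)`. -/
def POrientExtreme [Fintype V] (G : SimpleGraph V) (x : V → ℝ) (y : Sym2 V → V → ℝ) : Prop :=
  POrient G x y ∧
    ∀ (x₁ x₂ : V → ℝ) (y₁ y₂ : Sym2 V → V → ℝ) (t : ℝ),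
      POrient G x₁ y₁ → POrient G x₂ y₂ → 0 < t → t < 1 →
      (∀ v, x v = t * x₁ v + (1 - t) * x₂ v) →
      (∀ e u, y e u = t * y₁ e u + (1 - t) * y₂ e u) →
      x₁ = x₂ ∧ y₁ = y₂

/-- `(x, y)` is a minimal point of `P_orient(G)`: decreasing any single coordinate by
any `ε > 0`, keeping the other coordinates unchanged, yields a point outside the
polyhedron. -/
def POrientMinimal [Fintype V] (G : SimpleGraph V) (x : V → ℝ) (y : Sym2 V → V → ℝ) : Prop :=
  (∀ v, ∀ ε : ℝ, 0 < ε → ¬ POrient G (Function.update x v (x v - ε)) y) ∧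
  (∀ e u, ∀ ε : ℝ, 0 < ε →
    ¬ POrient G x (fun e' u' => if e' = e ∧ u' = u then y e u - ε else y e' u'))

/-- `x` is an extreme point of `P_WD(G)`: it is feasible and is not a proper convex
combination of two distinct points of `P_WD(G)`. -/
def PWDExtreme [Fintype V] (G : SimpleGraph V) (x : V → ℝ) : Prop :=
  PWD G x ∧
    ∀ (x₁ x₂ : V → ℝ) (t : ℝ), PWD G x₁ → PWD G x₂ → 0 < t → t < 1 →
      (∀ v, x v = t * x₁ v + (1 - t) * x₂ v) → x₁ = x₂

/-- The support graph `H(y)`: the bipartite graph on `V(G) ⊕ E(G)` joining a vertex `v`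
to an edge `e` whenever `v` is an endpoint of the edge `e` of `G` and `y e v > 0`. -/
def supportGraph [Fintype V] (G : SimpleGraph V) (y : Sym2 V → V → ℝ) :
    SimpleGraph (V ⊕ Sym2 V) :=
  SimpleGraph.fromRel fun a b =>
    ∃ v e, a = Sum.inl v ∧ b = Sum.inr e ∧ e ∈ G.edgeSet ∧ v ∈ e ∧ 0 < y e v

/-- The edge `e` lies on some cycle of `G`. -/
def OnCycle (G : SimpleGraph V) (e : Sym2 V) : Prop :=
  ∃ (u : V) (w : G.Walk u u), w.IsCycle ∧ e ∈ w.edges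

/-- `G` has a semi-disjoint cycle: a cycle containing at most one vertex whose degree
in `G` is strictly larger than `2`. -/
def HasSemiDisjointCycle [Fintype V] (G : SimpleGraph V) : Prop :=
  ∃ (u : V) (w : G.Walk u u), w.IsCycle ∧
    (w.support.toFinset.filter fun v => 2 < G.degree v).card ≤ 1

/-- The set `δ(F, V - F)` of edges of `G` with exactly one endpoint in `F`. -/
def cutEdges [Fintype V] (G : SimpleGraph V) (F : Finset V) : Finset (Sym2 V) :=
  G.edgeFinset.filter fun e => ∃ u v, e = s(u, v) ∧ u ∈ F ∧ v ∉ F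

/-- The function `f_x(S) = |E[S]| - |S| - Σ_{u ∈ S} (d_S(u) - 1) x_u`. -/
def fWD [Fintype V] (G : SimpleGraph V) (x : V → ℝ) (S : Finset V) : ℝ :=
  (edgesIn G S : ℝ) - S.card - ∑ u ∈ S, ((degIn G S u : ℝ) - 1) * x u

/-- The row vector `row(S)` of the weak density constraint for the set `S`:
its coordinate at `u` is `d_S(u) - 1` if `u ∈ S` and `0` otherwise. -/
def rowWD [Fintype V] (G : SimpleGraph V) (S : Finset V) (u : V) : ℝ :=
  if u ∈ S then (degIn G S u : ℝ) - 1 else 0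

/-- The constraints (orientation), (load), (cumulative) and nonnegativity of the
purely orientation-based ILP formulation for FVS, with one copy `y f` of the
orientation variables for each edge `f` of `G`:
* `x_v + x_w + y^f_{e,v} + y^f_{e,w} ≥ 1` for all edges `e = vw` and all `f ∈ E`;
* `x_v + Σ_{e = vw ∈ E} y^f_{e,w} ≥ 1` for all `v ∈ V` and all `f ∈ E`;
* `Σ_{v ∈ V - {a,b}} x_v + Σ_{e = vw ∈ E - {f}} (y^f_{e,w} + y^f_{e,v}) ≤ |V| - 2`
  for all `f = ab ∈ E`; and all variables nonnegative. -/
def OrientSD [Fintype V] (G : SimpleGraph V) (x : V → ℝ)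
    (y : Sym2 V → Sym2 V → V → ℝ) : Prop :=
  (∀ f ∈ G.edgeSet, ∀ v w, G.Adj v w →
    1 ≤ x v + x w + y f s(v, w) v + y f s(v, w) w) ∧
  (∀ f ∈ G.edgeSet, ∀ v : V, 1 ≤ x v + ∑ w ∈ G.neighborFinset v, y f s(v, w) w) ∧
  (∀ a b : V, G.Adj a b →
    (∑ v ∈ Finset.univ \ {a, b}, x v) +
      (∑ e ∈ G.edgeFinset.erase s(a, b),
        ∑ u ∈ Finset.univ.filter (fun u => u ∈ e), y s(a, b) e u)
      ≤ (Fintype.card V : ℝ) - 2) ∧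
  (∀ u, 0 ≤ x u) ∧ (∀ f e u, 0 ≤ y f e u)

end
end FVS

/-!
For `x ∈ {0,1}^V` with `U = {u : x_u = 0}`, both sides say that every `T ⊆ U` spans at most `|T|`
edges. If `(x, y) ∈ P_orient(G)`, every edge inside `T` carries at least one unit of `y` at its
endpoints while every vertex of `T` receives at most one unit, so double counting gives
`|E[T]| ≤ |T|`. Conversely, this density condition is Hall's condition for assigning to every edge
inside `U` one of its endpoints injectively, and orienting each such edge towards its assigned
endpoint is an integral `y`. Finally, a graph is a pseudoforest if and only if every vertex set `T`
spans at most `|T|` edges: in a component `C` meeting `T`, stepping from each vertex of `C \ T`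
towards `T` injects `C \ T` into the edges of `C` not inside `T`.
-/

namespace FVS

open SimpleGraph

lemma reachable_of_mem_edgeSet {W : Type*} {H : SimpleGraph W} {e : Sym2 W} (he : e ∈ H.edgeSet)
    {v w : W} (hv : v ∈ e) (hw : w ∈ e) : H.Reachable v w := by
  induction e with
  | _ a b =>
    rcases Sym2.mem_iff.1 hv with rfl | rfl <;> rcases Sym2.mem_iff.1 hw with rfl | rfl
    exacts [Reachable.refl _, Adj.reachable he, (Adj.reachable he).symm, Reachable.refl _]

lemma exists_adj_inf'_dist_lt {W : Type*} (H : SimpleGraph W) {T : Finset W} (hT : T.Nonempty)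
    {u : W} (hu : u ∉ T) (hreach : ∀ t ∈ T, H.Reachable u t) :
    ∃ w, H.Adj u w ∧ T.inf' hT (H.dist w) < T.inf' hT (H.dist u) := by
  obtain ⟨t, ht, hdt⟩ := exists_mem_eq_inf' hT (H.dist u)
  obtain ⟨p, hp⟩ := (hreach t ht).exists_walk_length_eq_dist
  cases p with
  | nil => exact absurd ht hu
  | cons hadj q =>
    refine ⟨_, hadj, ?_⟩
    rw [Walk.length_cons] at hp
    calc T.inf' hT (H.dist _) ≤ H.dist _ t := inf'_le _ ht
      _ ≤ q.length := dist_le q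
      _ < H.dist u t := by omega
      _ = _ := hdt.symm

section EdgesIn

variable {W : Type*} [Fintype W] (H : SimpleGraph W)

noncomputable def edgeFinsetIn (S : Finset W) : Finset (Sym2 W) :=
  H.edgeFinset.filter fun e => ∀ v ∈ e, v ∈ S

lemma edgesIn_eq_card_edgeFinsetIn (S : Finset W) : edgesIn H S = #(edgeFinsetIn H S) := rfl

lemma mk_mem_edgeFinsetIn {S : Finset W} {a b : W} :
    s(a, b) ∈ edgeFinsetIn H S ↔ H.Adj a b ∧ a ∈ S ∧ b ∈ S := by
  simp [edgeFinsetIn]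

lemma edgeFinsetIn_mono {S T : Finset W} (h : S ⊆ T) : edgeFinsetIn H S ⊆ edgeFinsetIn H T :=
  fun _ he => mem_filter.2 ⟨(mem_filter.1 he).1, fun v hv => h ((mem_filter.1 he).2 v hv)⟩

@[simp]
lemma edgesIn_empty : edgesIn H ∅ = 0 := by
  simp only [edgesIn_eq_card_edgeFinsetIn, card_eq_zero, edgeFinsetIn, filter_eq_empty_iff]
  exact fun e _ h => notMem_empty _ (h _ e.out_fst_mem)

noncomputable def componentFinset (C : H.ConnectedComponent) : Finset W :=
  univ.filter fun v => H.connectedComponentMk v = C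

@[simp]
lemma mem_componentFinset {C : H.ConnectedComponent} {v : W} :
    v ∈ componentFinset H C ↔ H.connectedComponentMk v = C := by
  simp [componentFinset]

lemma isPseudoforest_iff_edgesIn_componentFinset_le :
    IsPseudoforest H ↔ ∀ C, edgesIn H (componentFinset H C) ≤ #(componentFinset H C) := by
  simp [IsPseudoforest, edgesIn, componentFinset]

lemma card_sdiff_add_edgesIn_le (C : H.ConnectedComponent) {T : Finset W} (hT : T.Nonempty)
    (hTC : T ⊆ componentFinset H C) :
    #(componentFinset H C \ T) + edgesIn H T ≤ edgesIn H (componentFinset H C) := by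
  have : Nonempty W := ⟨hT.choose⟩
  have hstep : ∀ u ∈ componentFinset H C \ T,
      ∃ w, H.Adj u w ∧ T.inf' hT (H.dist w) < T.inf' hT (H.dist u) := by
    intro u hu
    rw [mem_sdiff, mem_componentFinset] at hu
    refine exists_adj_inf'_dist_lt H hT hu.2 fun t ht => ConnectedComponent.exact ?_
    rw [hu.1, eq_comm, ← mem_componentFinset H]
    exact hTC ht
  choose! g hadj hlt using hstep
  have hinj : #(componentFinset H C \ T) ≤
      #(edgeFinsetIn H (componentFinset H C) \ edgeFinsetIn H T) := by
    refine card_le_card_of_injOn (fun u => s(u, g u)) (fun u hu => ?_) fun u hu u' hu' huu' => ?_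
    · have hu' := mem_coe.1 hu
      rw [mem_sdiff, mem_componentFinset] at hu'
      have hgC : H.connectedComponentMk (g u) = C :=
        (ConnectedComponent.connectedComponentMk_eq_of_adj (hadj u hu)).symm.trans hu'.1
      simp [mk_mem_edgeFinsetIn, hadj u hu, hu'.1, hu'.2, hgC]
    · rcases Sym2.eq_iff.1 huu' with ⟨h, -⟩ | ⟨h₁, h₂⟩
      · exact h
      · have h := hlt u hu
        have h' := hlt u' hu'
        rw [h₂] at h
        rw [← h₁] at h'
        omega
  rw [edgesIn_eq_card_edgeFinsetIn, edgesIn_eq_card_edgeFinsetIn,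
    ← card_sdiff_add_card_eq_card (edgeFinsetIn_mono H hTC)]
  omega

lemma edgesIn_le_card_of_subset_componentFinset {C : H.ConnectedComponent}
    (hC : edgesIn H (componentFinset H C) ≤ #(componentFinset H C)) {T : Finset W}
    (hTC : T ⊆ componentFinset H C) : edgesIn H T ≤ #T := by
  rcases T.eq_empty_or_nonempty with rfl | hT
  · simp
  · have := card_sdiff_add_edgesIn_le H C hT hTC
    have := card_sdiff_add_card_eq_card hTC
    omega

lemma edgesIn_eq_sum_connectedComponent [Fintype H.ConnectedComponent] (T : Finset W) :
    edgesIn H T = ∑ C, edgesIn H (T.filter fun v => H.connectedComponentMk v = C) := by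
  rw [edgesIn_eq_card_edgeFinsetIn,
    card_eq_sum_card_fiberwise (f := fun e => H.connectedComponentMk e.out.1)
      fun _ _ => mem_coe.2 (mem_univ _)]
  refine sum_congr rfl fun C _ => congrArg card (ext fun e => ?_)
  simp only [edgeFinsetIn, mem_filter]
  constructor
  · rintro ⟨⟨he, hT⟩, hC⟩
    exact ⟨he, fun v hv => ⟨hT v hv,
      (ConnectedComponent.sound (reachable_of_mem_edgeSet (mem_edgeFinset.1 he) hv
        e.out_fst_mem)).trans hC⟩⟩
  · rintro ⟨he, h⟩
    exact ⟨⟨he, fun v hv => (h v hv).1⟩, (h _ e.out_fst_mem).2⟩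

theorem edgesIn_le_card_of_isPseudoforest (hH : IsPseudoforest H) (T : Finset W) :
    edgesIn H T ≤ #T := by
  have := Fintype.ofFinite H.ConnectedComponent
  rw [isPseudoforest_iff_edgesIn_componentFinset_le] at hH
  calc edgesIn H T = ∑ C, edgesIn H (T.filter fun v => H.connectedComponentMk v = C) :=
        edgesIn_eq_sum_connectedComponent H T
    _ ≤ ∑ C, #(T.filter fun v => H.connectedComponentMk v = C) :=
        sum_le_sum fun C _ => edgesIn_le_card_of_subset_componentFinset H (hH C)
          fun v hv => (mem_componentFinset H).2 (mem_filter.1 hv).2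
    _ = #T := (card_eq_sum_card_fiberwise fun _ _ => mem_coe.2 (mem_univ _)).symm

theorem isPseudoforest_iff_forall_edgesIn_le_card :
    IsPseudoforest H ↔ ∀ T, edgesIn H T ≤ #T :=
  ⟨edgesIn_le_card_of_isPseudoforest H,
    fun h => (isPseudoforest_iff_edgesIn_componentFinset_le H).2 fun _ => h _⟩

end EdgesIn

section Orientation

variable {V : Type*} [Fintype V] (G : SimpleGraph V)

lemma edgesIn_induce (s : Set V) [Fintype s] (T : Finset s) :
    edgesIn (G.induce s) T = edgesIn G (T.map (Function.Embedding.subtype _)) := by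
  rw [edgesIn_eq_card_edgeFinsetIn, edgesIn_eq_card_edgeFinsetIn]
  refine card_bij (fun e _ => Sym2.map Subtype.val e) (fun e he => ?_)
    (fun _ _ _ _ h => Sym2.map.injective Subtype.val_injective h) (fun e he => ?_)
  · induction e with
    | _ a b => simp_all [mk_mem_edgeFinsetIn]
  · induction e with
    | _ a b =>
      obtain ⟨hab, ha, hb⟩ := (mk_mem_edgeFinsetIn G).1 he
      obtain ⟨a', ha', rfl⟩ := mem_map.1 ha
      obtain ⟨b', hb', rfl⟩ := mem_map.1 hb
      exact ⟨s(a', b'), (mk_mem_edgeFinsetIn _).2 ⟨hab, ha', hb'⟩, rfl⟩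

lemma isPFDS_iff_forall_edgesIn_le_card (D : Finset V) :
    IsPFDS G D ↔ ∀ T : Finset V, (∀ u ∈ T, u ∉ D) → edgesIn G T ≤ #T := by
  rw [IsPFDS, isPseudoforest_iff_forall_edgesIn_le_card]
  constructor
  · intro h T hT
    have hT' : (T.subtype (· ∉ D)).map (Function.Embedding.subtype _) = T :=
      (subtype_map _).trans (filter_true_of_mem hT)
    have := h (T.subtype (· ∉ D))
    rw [edgesIn_induce, ← card_map (Function.Embedding.subtype _)] at this
    convert this using 2 <;> exact hT'.symm
  · intro h T
    rw [edgesIn_induce, ← card_map (Function.Embedding.subtype _)]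
    exact h _ fun u hu => by
      obtain ⟨v, -, rfl⟩ := mem_map.1 hu
      exact v.2

variable {G}

lemma POrient.edgesIn_le_card {x : V → ℝ} {y : Sym2 V → V → ℝ} (hxy : POrient G x y)
    {T : Finset V} (hT : ∀ u ∈ T, x u = 0) : edgesIn G T ≤ #T := by
  obtain ⟨horient, hload, -, hy, hsupp⟩ := hxy
  have hedge : ∀ e ∈ edgeFinsetIn G T, 1 ≤ ∑ u ∈ T, y e u := by
    intro e he
    induction e with
    | _ a b =>
      obtain ⟨hab, ha, hb⟩ := (mk_mem_edgeFinsetIn G).1 he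
      calc 1 ≤ y s(a, b) a + y s(a, b) b := by linarith [horient a b hab, hT a ha, hT b hb]
        _ = ∑ u ∈ {a, b}, y s(a, b) u := (sum_pair hab.ne).symm
        _ ≤ ∑ u ∈ T, y s(a, b) u := sum_le_sum_of_subset_of_nonneg
          (insert_subset ha (singleton_subset_iff.2 hb)) fun u _ _ => hy _ _
  have hvertex : ∀ u ∈ T, ∑ e ∈ edgeFinsetIn G T, y e u ≤ 1 := by
    intro u hu
    calc ∑ e ∈ edgeFinsetIn G T, y e u
        = ∑ e ∈ (edgeFinsetIn G T).filter (u ∈ ·), y e u :=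
          (sum_filter_of_ne fun e _ hne => by_contra fun h => hne (hsupp e u fun h' => h h'.2)).symm
      _ ≤ ∑ e ∈ G.edgeFinset.filter (u ∈ ·), y e u :=
          sum_le_sum_of_subset_of_nonneg (filter_subset_filter _ (filter_subset _ _))
            fun _ _ _ => hy _ _
      _ ≤ 1 := by linarith [hload u, hT u hu]
  have : (edgesIn G T : ℝ) ≤ #T := calc
    (edgesIn G T : ℝ) = ∑ _e ∈ edgeFinsetIn G T, (1 : ℝ) := by
        simp [edgesIn_eq_card_edgeFinsetIn]
    _ ≤ ∑ e ∈ edgeFinsetIn G T, ∑ u ∈ T, y e u := sum_le_sum hedge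
    _ = ∑ u ∈ T, ∑ e ∈ edgeFinsetIn G T, y e u := sum_comm
    _ ≤ ∑ _u ∈ T, (1 : ℝ) := sum_le_sum hvertex
    _ = #T := by simp
  exact_mod_cast this

variable (G)

lemma exists_injective_mem_of_forall_edgesIn_le_card (U : Finset V)
    (h : ∀ T ⊆ U, edgesIn G T ≤ #T) :
    ∃ f : edgeFinsetIn G U → V, Function.Injective f ∧ ∀ e, f e ∈ e.1 := by
  have hall : ∀ s : Finset (edgeFinsetIn G U),
      #s ≤ #(s.biUnion fun e => (e : Sym2 V).toFinset) := by
    intro s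
    set T := s.biUnion fun e => (e : Sym2 V).toFinset
    have hTU : T ⊆ U := fun v hv => by
      obtain ⟨e, -, hv⟩ := mem_biUnion.1 hv
      exact (mem_filter.1 e.2).2 v (Sym2.mem_toFinset.1 hv)
    calc #s ≤ edgesIn G T :=
          card_le_card_of_injOn Subtype.val (fun e he => mem_filter.2 ⟨(mem_filter.1 e.2).1,
            fun v hv => mem_biUnion.2 ⟨e, he, Sym2.mem_toFinset.2 hv⟩⟩)
            Subtype.val_injective.injOn
      _ ≤ #T := h T hTU
  obtain ⟨f, hf, hfe⟩ := (all_card_le_biUnion_card_iff_exists_injective _).1 hall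
  exact ⟨f, hf, fun e => Sym2.mem_toFinset.1 (hfe e)⟩

lemma qOrient_of_injective_mem {x : V → ℝ} (hx : ∀ u, x u = 0 ∨ x u = 1)
    (f : edgeFinsetIn G (univ.filter fun u => x u = 0) → V) (hf : Function.Injective f)
    (hfe : ∀ e, f e ∈ e.1) : QOrient G x := by
  let P : Sym2 V → V → Prop := fun e u => ∃ he, f ⟨e, he⟩ = u
  have hP : ∀ {e u}, P e u → e ∈ G.edgeSet ∧ u ∈ e ∧ x u = 0 := by
    rintro e u ⟨he, rfl⟩
    have he' := mem_filter.1 he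
    exact ⟨mem_edgeFinset.1 he'.1, hfe _, (mem_filter.1 (he'.2 _ (hfe _))).2⟩
  have hxnn : ∀ u, 0 ≤ x u := fun u => by rcases hx u with h | h <;> simp [h]
  have hynn : ∀ e u, (0 : ℝ) ≤ if P e u then 1 else 0 := fun e u => by split_ifs <;> norm_num
  refine ⟨fun e u => if P e u then 1 else 0, fun u v huv => ?_, fun u => ?_, hxnn, hynn,
    fun e u h => if_neg fun hp => h ⟨(hP hp).1, (hP hp).2.1⟩⟩
  · rcases hx u with hu | hu
    · rcases hx v with hv | hv
      · have he : s(u, v) ∈ edgeFinsetIn G (univ.filter fun u => x u = 0) :=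
          (mk_mem_edgeFinsetIn G).2 ⟨huv, by simp [hu], by simp [hv]⟩
        rcases Sym2.mem_iff.1 (hfe ⟨_, he⟩) with h | h
        · simp only [show P s(u, v) u from ⟨he, h⟩, if_true]
          linarith [hxnn u, hxnn v, hynn s(u, v) v]
        · simp only [show P s(u, v) v from ⟨he, h⟩, if_true]
          linarith [hxnn u, hxnn v, hynn s(u, v) u]
      · linarith [hxnn u, hynn s(u, v) u, hynn s(u, v) v]
    · linarith [hxnn v, hynn s(u, v) u, hynn s(u, v) v]
  · have hcard : #((G.edgeFinset.filter (u ∈ ·)).filter (P · u)) ≤ 1 :=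
      card_le_one.2 fun e₁ h₁ e₂ h₂ => by
        obtain ⟨_, hu₁⟩ := (mem_filter.1 h₁).2
        obtain ⟨_, hu₂⟩ := (mem_filter.1 h₂).2
        exact congrArg Subtype.val (hf (hu₁.trans hu₂.symm))
    rw [sum_boole]
    rcases hx u with hu | hu
    · rw [hu, zero_add]
      exact_mod_cast hcard
    · have hempty : (G.edgeFinset.filter (u ∈ ·)).filter (P · u) = ∅ :=
        filter_eq_empty_iff.2 fun e _ hp => by linarith [(hP hp).2.2]
      simp [hempty, hu]

end Orientation

/-- A 0-1 vector `x` lies in `Q_orient(G)` if and only if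
`S = {u : x_u = 1}` is a pseudoforest deletion set of `G`. -/
theorem stmt_0 {V : Type*} [Fintype V] (G : SimpleGraph V) (x : V → ℝ)
    (hx : ∀ u, x u = 0 ∨ x u = 1) :
    QOrient G x ↔ IsPFDS G (Finset.univ.filter fun u => x u = 1) := by
  have hzero : ∀ u, u ∉ univ.filter (fun u => x u = 1) ↔ x u = 0 := fun u => by
    rcases hx u with h | h <;> simp [h]
  rw [isPFDS_iff_forall_edgesIn_le_card]
  constructor
  · rintro ⟨y, hxy⟩ T hT
    exact hxy.edgesIn_le_card fun u hu => (hzero u).1 (hT u hu)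
  · intro h
    obtain ⟨f, hf, hfe⟩ := exists_injective_mem_of_forall_edgesIn_le_card G _
      fun T hT => h T fun u hu => (hzero u).2 (mem_filter.1 (hT hu)).2
    exact qOrient_of_injective_mem G hx f hf hfe

end FVS
end

section
/- Let G=(V,E) be a finite undirected graph. Then Q_orient(G) ⊆ P_WD-Subgraphs(G); that is, for every x ∈ ℝ^V for which there exists y with (x,y) ∈ P_orient(G), and for every subgraph G' = (V', E') of G, the inequality Σ_{u∈V'} (d_{G'}(u) − 1) x_u ≥ |E'| − |V'| holds. In particular, Q_orient(G) ⊆ P_WD(G). -/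
/- Common definitions for the polyhedral study of FVS / PFDS. -/

open scoped Classical
open Finset

/-! Each edge `e = uv` of `G'` draws a unit of charge from `x_u + x_v + y_{e,u} + y_{e,v}`.
Collecting the charge at the vertices, `u` gives at most `d_{G'}(u) x_u + Σ_{e ∋ u} y_{e,u}`, which
its load constraint bounds by `(d_{G'}(u) - 1) x_u + 1`; summing over `V'` yields
`|E'| ≤ Σ_{u ∈ V'} (d_{G'}(u) - 1) x_u + |V'|`. The weak density inequalities are the case of
induced subgraphs. -/

namespace FVS

section

variable {V : Type*} {G : SimpleGraph V}

lemma mem_edgeSet_induce_top {S : Set V} {e : Sym2 V} :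
    e ∈ ((⊤ : G.Subgraph).induce S).edgeSet ↔ e ∈ G.edgeSet ∧ ∀ v ∈ e, v ∈ S := by
  induction e using Sym2.ind with
  | _ a b =>
    simp only [SimpleGraph.Subgraph.mem_edgeSet, SimpleGraph.Subgraph.induce_adj,
      SimpleGraph.Subgraph.top_adj, SimpleGraph.mem_edgeSet, Sym2.mem_iff]
    grind

variable [Fintype V]

lemma ncard_edgeSet_induce_top (S : Finset V) :
    ((⊤ : G.Subgraph).induce S).edgeSet.ncard = edgesIn G S := by
  rw [edgesIn, ← Set.ncard_coe_finset]
  congr 1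
  ext e
  simp [mem_edgeSet_induce_top]

lemma degree_induce_top {S : Finset V} {u : V} (hu : u ∈ S) :
    ((⊤ : G.Subgraph).induce S).degree u = degIn G S u := by
  rw [← SimpleGraph.Subgraph.finset_card_neighborSet_eq_degree, degIn]
  congr 1
  ext v
  simp [hu]

variable {x : V → ℝ} {y : Sym2 V → V → ℝ}

lemma POrient.one_le_sum_endpoints (h : POrient G x y) {S : Finset V} {e : Sym2 V}
    (he : e ∈ G.edgeSet) (hS : ∀ v ∈ e, v ∈ S) :
    1 ≤ ∑ u ∈ S with u ∈ e, (x u + y e u) := by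
  induction e using Sym2.ind with
  | _ a b =>
    have hab : G.Adj a b := he
    have hends : {u ∈ S | u ∈ s(a, b)} = {a, b} := by
      ext v
      simp only [mem_filter, mem_insert, mem_singleton, Sym2.mem_iff]
      exact ⟨And.right, fun hv => ⟨hS v (Sym2.mem_iff.mpr hv), hv⟩⟩
    rw [hends, sum_pair hab.ne]
    linarith [h.1 a b hab]

lemma POrient.sum_incidenceFinset_le (h : POrient G x y) {H : SimpleGraph V} (hH : H ≤ G)
    (u : V) :
    ∑ e ∈ H.incidenceFinset u, (x u + y e u) ≤ ((H.degree u : ℝ) - 1) * x u + 1 := by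
  have hload : ∑ e ∈ H.incidenceFinset u, y e u ≤ ∑ e ∈ G.edgeFinset with u ∈ e, y e u := by
    rw [H.incidenceFinset_eq_filter]
    exact sum_le_sum_of_subset_of_nonneg (filter_subset_filter _ (SimpleGraph.edgeFinset_mono hH))
      fun e _ _ => h.2.2.2.1 e u
  rw [sum_add_distrib, sum_const, H.card_incidenceFinset_eq_degree, nsmul_eq_mul]
  linarith [h.2.1 u]

theorem POrient.card_edgeFinset_sub_card_le (h : POrient G x y) {H : SimpleGraph V}
    (hH : H ≤ G) {S : Finset V} (hS : ∀ e ∈ H.edgeSet, ∀ v ∈ e, v ∈ S) :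
    (#H.edgeFinset : ℝ) - #S ≤ ∑ u ∈ S, ((H.degree u : ℝ) - 1) * x u := by
  have hswap : ∑ e ∈ H.edgeFinset, ∑ u ∈ S with u ∈ e, (x u + y e u) =
      ∑ u ∈ S, ∑ e ∈ H.incidenceFinset u, (x u + y e u) := by
    simp only [H.incidenceFinset_eq_filter, sum_filter]
    exact sum_comm
  have hcount : (#H.edgeFinset : ℝ) ≤ ∑ u ∈ S, (((H.degree u : ℝ) - 1) * x u + 1) :=
    calc (#H.edgeFinset : ℝ) = ∑ _e ∈ H.edgeFinset, (1 : ℝ) := by simp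
      _ ≤ ∑ e ∈ H.edgeFinset, ∑ u ∈ S with u ∈ e, (x u + y e u) :=
        sum_le_sum fun e he => by
          rw [SimpleGraph.mem_edgeFinset] at he
          exact h.one_le_sum_endpoints (SimpleGraph.edgeSet_mono hH he) (hS e he)
      _ = ∑ u ∈ S, ∑ e ∈ H.incidenceFinset u, (x u + y e u) := hswap
      _ ≤ _ := sum_le_sum fun u _ => h.sum_incidenceFinset_le hH u
  rw [sum_add_distrib, sum_const, nsmul_one] at hcount
  linarith

theorem POrient.ncard_edgeSet_sub_ncard_verts_le (h : POrient G x y) (H : G.Subgraph) :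
    (H.edgeSet.ncard : ℝ) - H.verts.ncard ≤
      ∑ u ∈ H.verts.toFinset, ((H.degree u : ℝ) - 1) * x u := by
  have hcount := h.card_edgeFinset_sub_card_le H.spanningCoe_le (S := H.verts.toFinset)
    fun e he v hv =>
      Set.mem_toFinset.mpr (H.mem_verts_of_mem_edge (H.edgeSet_spanningCoe ▸ he) hv)
  rw [← Set.ncard_eq_toFinset_card', ← Set.ncard_coe_finset, SimpleGraph.coe_edgeFinset,
    H.edgeSet_spanningCoe] at hcount
  simpa only [SimpleGraph.Subgraph.degree_spanningCoe] using hcount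

theorem POrient.pwd (h : POrient G x y) : PWD G x := by
  refine ⟨h.2.2.1, fun S => ?_⟩
  have hS := h.ncard_edgeSet_sub_ncard_verts_le ((⊤ : G.Subgraph).induce S)
  simp only [ncard_edgeSet_induce_top, SimpleGraph.Subgraph.induce_verts, Set.ncard_coe_finset,
    Finset.toFinset_coe] at hS
  refine hS.trans_eq (sum_congr rfl fun u hu => ?_)
  congr 3
  -- `convert` reconciles the classical and the `induce` decidability instances behind `degree`
  convert degree_induce_top hu

end

/-- `Q_orient(G) ⊆ P_WD-Subgraphs(G)`; in particular
`Q_orient(G) ⊆ P_WD(G)`. -/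
theorem stmt_1 {V : Type*} [Fintype V] (G : SimpleGraph V) (x : V → ℝ)
    (hx : QOrient G x) :
    (∀ H : G.Subgraph, (H.edgeSet.ncard : ℝ) - H.verts.ncard ≤
        ∑ u ∈ H.verts.toFinset, ((H.degree u : ℝ) - 1) * x u) ∧
    PWD G x := by
  obtain ⟨y, hy⟩ := hx
  exact ⟨hy.ncard_edgeSet_sub_ncard_verts_le, hy.pwd⟩

end FVS
end

section
/- Let G=(V,E) be a finite undirected graph with nonnegative vertex costs c : V → ℝ_{≥0}. For every point x ∈ P_WD(G) ∩ P_cycle-cover(G), there exists a feedback vertex set F ⊆ V such that Σ_{u∈F} c(u) ≤ 2 · Σ_{u∈V} c(u) x_u. Consequently, the integrality gap of the LP relaxation min{Σ_{u∈V} c_u x_u : x ∈ P_WD(G) ∩ P_cycle-cover(G)} is at most 2. -/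
/- Common definitions for the polyhedral study of FVS / PFDS. -/

open scoped Classical
open Finset

/-!
Local ratio, after Bafna–Berman–Fujito and Chudak–Goemans–Hochbaum–Williamson. Induct on the
vertex set `R` and on the support of the cost `c`. A vertex of cost `0` is put into the solution
and a vertex of degree at most `1` in `G[R]` is discarded. Otherwise `G[R]` has minimum degree
`2`, and subtracting from `c` the largest multiple of a weight `φ` that keeps it nonnegative
makes one more cost vanish; a solution for the reduced cost, pruned to a minimal feedback vertex
set of `G[R]`, stays `2`-approximate for `c` as soon as every minimal feedback vertex set `F`
satisfies `φ(F) ≤ 2 Σ_R φ_u x_u`.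
* If `G[R]` has a semi-disjoint cycle `C`, take `φ = 1_C`: `C` is an induced cycle, so
  `x(C) ≥ 1`, while a minimal `F` meets `C` at most twice.
* Otherwise take `φ_u = d_R(u) - 1`, the row of the weak density constraint for `R`. Each
  `v ∈ F` sends two edges into one tree of the forest `G[R \ F]`, a tree that is not a path of
  degree-`2` vertices; counting degrees tree by tree gives
  `Σ_F (d_R - 1) ≤ 2 (|E[R]| - |R|) ≤ 2 Σ_R (d_R(u) - 1) x_u`.
-/

namespace FVS

open SimpleGraph

universe u

variable {V : Type u}

section Restrict

/-- `G[R]` kept on the ambient vertex type, so that `R` can shrink along an induction. -/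
def restrict (G : SimpleGraph V) (R : Finset V) : SimpleGraph V where
  Adj u v := G.Adj u v ∧ u ∈ R ∧ v ∈ R
  symm := ⟨fun _ _ h => ⟨h.1.symm, h.2.2, h.2.1⟩⟩
  loopless := ⟨fun u h => G.loopless.irrefl u h.1⟩

def AcyclicOn (G : SimpleGraph V) (R : Finset V) : Prop := (restrict G R).IsAcyclic

variable {G H : SimpleGraph V} {A B : Finset V}

lemma restrict_le : restrict G A ≤ G := fun _ _ h => h.1

lemma restrict_mono (h : A ⊆ B) : restrict G A ≤ restrict G B :=
  fun _ _ h' => ⟨h'.1, h h'.2.1, h h'.2.2⟩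

lemma mem_of_mem_support_restrict {a b z : V} (p : (restrict G A).Walk a b) (ha : a ∈ A)
    (hz : z ∈ p.support) : z ∈ A := by
  induction p with
  | nil => rwa [List.mem_singleton.mp hz]
  | cons h p ih =>
    rcases List.mem_cons.mp hz with rfl | hz
    exacts [ha, ih h.2.2 hz]

lemma mem_of_mem_support_of_isCycle {u z : V} {K : (restrict G A).Walk u u}
    (hK : K.IsCycle) (hz : z ∈ K.support) : z ∈ A := by
  cases K with
  | nil => exact absurd hK Walk.not_isCycle_nil
  | cons h p => exact mem_of_mem_support_restrict _ h.2.1 hz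

lemma acyclicOn_empty : AcyclicOn G ∅ := fun _ K hK => by
  simpa using mem_of_mem_support_of_isCycle hK K.start_mem_support

lemma mem_edgeSet_restrict {a b : V} (hH : H ≤ G) {p : H.Walk a b}
    (hp : ∀ z ∈ p.support, z ∈ B) {e : Sym2 V} (he : e ∈ p.edges) :
    e ∈ (restrict G B).edgeSet := by
  induction e using Sym2.ind with
  | _ y z =>
    exact ⟨hH (p.adj_of_mem_edges he), hp y (p.fst_mem_support_of_mem_edges he),
      hp z (p.snd_mem_support_of_mem_edges he)⟩

lemma reachable_restrict {a b : V} (hH : H ≤ G) (p : H.Walk a b)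
    (hp : ∀ z ∈ p.support, z ∈ B) : (restrict G B).Reachable a b :=
  ⟨p.transfer _ fun _ => mem_edgeSet_restrict hH hp⟩

lemma not_acyclicOn_of_isCycle {u : V} (hH : H ≤ G) {K : H.Walk u u} (hK : K.IsCycle)
    (hp : ∀ z ∈ K.support, z ∈ B) : ¬ AcyclicOn G B :=
  fun h => h _ (hK.transfer fun _ => mem_edgeSet_restrict hH hp)

end Restrict

section Counting

variable [Fintype V] {G : SimpleGraph V}

lemma degIn_mono {S T : Finset V} (h : S ⊆ T) (u : V) : degIn G S u ≤ degIn G T u :=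
  card_le_card (filter_subset_filter _ h)

lemma degIn_eq_degIn_sdiff_add_degIn {R F : Finset V} (hF : F ⊆ R) (u : V) :
    degIn G R u = degIn G (R \ F) u + degIn G F u := by
  unfold degIn
  rw [← card_union_of_disjoint (disjoint_filter_filter sdiff_disjoint), ← filter_union,
    sdiff_union_of_subset hF]

lemma sum_degIn_comm (A B : Finset V) : ∑ a ∈ A, degIn G B a = ∑ b ∈ B, degIn G A b := by
  simp only [degIn, card_filter]
  rw [sum_comm]
  simp only [G.adj_comm]

lemma edgesIn_eq_card_edgeFinset_induce (S : Finset V) :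
    edgesIn G S = #(G.induce (S : Set V)).edgeFinset := by
  rw [← card_filter_edgeFinset_toFinset_subset]
  simp only [edgesIn, Finset.subset_iff, Sym2.mem_toFinset]

lemma degIn_eq_degree_induce (S : Finset V) (u : (S : Set V)) :
    degIn G S u = (G.induce (S : Set V)).degree u := by
  rw [← card_neighborFinset_eq_degree, ← card_map (.subtype (· ∈ (S : Set V)))]
  unfold degIn
  congr 1
  ext v
  simp [and_comm]

lemma sum_degIn_eq_two_mul_edgesIn (S : Finset V) :
    ∑ u ∈ S, degIn G S u = 2 * edgesIn G S := by
  rw [edgesIn_eq_card_edgeFinset_induce, ← sum_degrees_eq_twice_card_edges, ← sum_coe_sort S]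
  exact Fintype.sum_congr _ _ (degIn_eq_degree_induce S)

lemma card_eq_edgesIn_add_one {S : Finset V} (h : (G.induce (S : Set V)).IsTree) :
    #S = edgesIn G S + 1 := by
  rw [edgesIn_eq_card_edgeFinset_induce, h.card_edgeFinset]
  simp

end Counting

section CycleNeighbours

variable [Fintype V] {G H : SimpleGraph V}

noncomputable def walkNbrs {a b : V} (p : H.Walk a b) (u : V) : Finset V :=
  univ.filter fun z => s(u, z) ∈ p.edges

lemma card_walkNbrs_of_isCycle {a u : V} {K : H.Walk a a} (hK : K.IsCycle) (hu : u ∈ K.support) :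
    #(walkNbrs K u) = 2 := by
  rw [← Set.ncard_coe_finset, ← hK.ncard_neighborSet_toSubgraph_eq_two hu]
  congr 1
  ext z
  simp [walkNbrs, Walk.adj_toSubgraph_iff_mem_edges]

lemma walkNbrs_subset {A : Finset V} {a b u : V} (p : (restrict G A).Walk a b) :
    walkNbrs p u ⊆ A.filter (G.Adj u) := by
  intro z hz
  have h := p.adj_of_mem_edges (mem_filter.mp hz).2
  exact mem_filter.mpr ⟨h.2.2, h.1⟩

lemma two_le_degIn_of_isCycle {A : Finset V} {a u : V} {K : (restrict G A).Walk a a}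
    (hK : K.IsCycle) (hu : u ∈ K.support) : 2 ≤ degIn G A u :=
  card_walkNbrs_of_isCycle hK hu ▸ card_le_card (walkNbrs_subset K)

lemma mem_edges_of_degIn_eq_two {A R : Finset V} {a u y : V} (hAR : A ⊆ R)
    {K : (restrict G A).Walk a a} (hK : K.IsCycle) (hu : u ∈ K.support)
    (hdeg : degIn G R u = 2) (hy : G.Adj u y) (hyR : y ∈ R) : s(u, y) ∈ K.edges := by
  have hsub : walkNbrs K u ⊆ R.filter (G.Adj u) :=
    (walkNbrs_subset K).trans (filter_subset_filter _ hAR)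
  have heq := eq_of_subset_of_card_le hsub
    (by rw [card_walkNbrs_of_isCycle hK hu]; exact hdeg.le)
  exact (mem_filter.mp (heq ▸ mem_filter.mpr ⟨hyR, hy⟩ : y ∈ walkNbrs K u)).2

end CycleNeighbours

section CyclePaths

variable {H : SimpleGraph V}

lemma exists_walk_from_snd_of_isCycle {v w : V} {c : H.Walk v v} (hc : c.IsCycle)
    (hw : w ∈ c.support) (hwv : w ≠ v) :
    ∃ p : H.Walk c.snd w, ∀ z ∈ p.support, z ∈ c.support ∧ z ≠ v := by
  have htail : w ∈ c.tail.support := by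
    rw [← Walk.cons_support_tail hc.not_nil, List.mem_cons] at hw
    exact hw.resolve_left hwv
  refine ⟨c.tail.takeUntil w htail, fun z hz => ⟨?_, ?_⟩⟩
  · rw [← Walk.cons_support_tail hc.not_nil]
    exact List.mem_cons_of_mem _ (c.tail.support_takeUntil_subset_support htail hz)
  · rintro rfl
    exact Walk.endpoint_notMem_support_takeUntil hc.isPath_tail htail hwv.symm hz

lemma exists_walk_avoiding_of_isCycle {u v a b : V} {K : H.Walk u u} (hK : K.IsCycle)
    (hv : v ∈ K.support) (ha : a ∈ K.support) (hb : b ∈ K.support) (hav : a ≠ v)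
    (hbv : b ≠ v) : ∃ p : H.Walk a b, ∀ z ∈ p.support, z ∈ K.support ∧ z ≠ v := by
  have hmem : ∀ z, z ∈ (K.rotate v hv).support ↔ z ∈ K.support :=
    fun z => K.mem_support_rotate_iff v hv
  have hc := hK.rotate hv
  obtain ⟨pa, hpa⟩ := exists_walk_from_snd_of_isCycle hc ((hmem a).2 ha) hav
  obtain ⟨pb, hpb⟩ := exists_walk_from_snd_of_isCycle hc ((hmem b).2 hb) hbv
  refine ⟨pa.reverse.append pb, fun z hz => ?_⟩
  rw [Walk.mem_support_append_iff, Walk.support_reverse, List.mem_reverse] at hz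
  obtain ⟨hzK, hzv⟩ := hz.elim (hpa z) (hpb z)
  exact ⟨(hmem z).1 hzK, hzv⟩

lemma prop_end_of_adj_closed {H : SimpleGraph V} {P Q : V → Prop} {a b : V}
    (p : H.Walk a b) (hQ : ∀ z ∈ p.support, Q z) (hstep : ∀ z z', H.Adj z z' → Q z → P z → P z')
    (ha : P a) : P b := by
  induction p with
  | nil => exact ha
  | cons h p ih =>
    exact ih (fun z hz => hQ z (List.mem_cons_of_mem _ hz))
      (hstep _ _ h (hQ _ List.mem_cons_self) ha)

end CyclePaths

section MinimalFVS

variable {G : SimpleGraph V} {R F : Finset V}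

structure IsMinimalFVSOn (G : SimpleGraph V) (R F : Finset V) : Prop where
  subset : F ⊆ R
  acyclicOn : AcyclicOn G (R \ F)
  not_acyclicOn_erase : ∀ v ∈ F, ¬ AcyclicOn G (R \ F.erase v)

lemma exists_isMinimalFVSOn_subset (hFR : F ⊆ R) (hF : AcyclicOn G (R \ F)) :
    ∃ F₀ ⊆ F, IsMinimalFVSOn G R F₀ := by
  obtain ⟨F₀, hF₀F, hmin⟩ :=
    exists_minimal_le_of_wellFoundedLT (fun F' => AcyclicOn G (R \ F')) F hF
  exact ⟨F₀, hF₀F, ⟨hF₀F.trans hFR, hmin.prop,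
    fun v hv => hmin.not_prop_of_lt (erase_ssubset hv)⟩⟩

lemma IsMinimalFVSOn.exists_isCycle (hF : IsMinimalFVSOn G R F) {v : V} (hv : v ∈ F) :
    ∃ K : (restrict G (R \ F.erase v)).Walk v v, K.IsCycle := by
  obtain ⟨u, K, hK⟩ : ∃ u, ∃ K : (restrict G (R \ F.erase v)).Walk u u, K.IsCycle := by
    simpa [AcyclicOn, IsAcyclic] using hF.not_acyclicOn_erase v hv
  have hvK : v ∈ K.support := by
    by_contra hvK
    refine not_acyclicOn_of_isCycle restrict_le hK (fun z hz => ?_) hF.acyclicOn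
    have hz' := mem_of_mem_support_of_isCycle hK hz
    simp only [mem_sdiff, mem_erase, not_and] at hz' ⊢
    exact ⟨hz'.1, fun hzF => hz'.2 (fun hzv => hvK (hzv ▸ hz)) hzF⟩
  exact ⟨K.rotate v hvK, hK.rotate hvK⟩

end MinimalFVS

section SemiDisjoint

variable [Fintype V] {G : SimpleGraph V} {R F : Finset V} {u : V} {w : (restrict G R).Walk u u}

lemma degree_restrict {v : V} (hv : v ∈ R) : (restrict G R).degree v = degIn G R v := by
  rw [← card_neighborFinset_eq_degree]
  unfold degIn
  congr 1
  ext a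
  simp only [mem_neighborFinset, mem_filter]
  exact ⟨fun h => ⟨h.2.2, h.1⟩, fun h => ⟨h.2, hv, h.1⟩⟩

lemma filter_degree_restrict_eq (hw : w.IsCycle) :
    w.support.toFinset.filter (fun z => 2 < (restrict G R).degree z) =
      w.support.toFinset.filter (fun z => 2 < degIn G R z) :=
  filter_congr fun z hz => by
    rw [degree_restrict (mem_of_mem_support_of_isCycle hw (List.mem_toFinset.mp hz))]

lemma exists_forall_ne_degIn_eq_two (hclean : ∀ v ∈ R, 2 ≤ degIn G R v) (hw : w.IsCycle)
    (hsd : #(w.support.toFinset.filter fun z => 2 < degIn G R z) ≤ 1) :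
    ∃ b ∈ w.support, ∀ z ∈ w.support, z ≠ b → degIn G R z = 2 := by
  have : Nonempty V := ⟨u⟩
  obtain ⟨e, he⟩ := card_le_one_iff_subset_singleton.mp hsd
  have hdeg : ∀ z ∈ w.support, z ≠ e → degIn G R z = 2 := fun z hz hze => by
    have h2 := hclean z (mem_of_mem_support_of_isCycle hw hz)
    have hn2 : ¬ 2 < degIn G R z := fun hlt =>
      hze (mem_singleton.mp (he (mem_filter.mpr ⟨List.mem_toFinset.mpr hz, hlt⟩)))
    omega
  by_cases heC : e ∈ w.support
  · exact ⟨e, heC, hdeg⟩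
  · exact ⟨u, w.start_mem_support, fun z hz _ => hdeg z hz fun hze => heC (hze ▸ hz)⟩

lemma isInducedCycle_support (hclean : ∀ v ∈ R, 2 ≤ degIn G R v) (hw : w.IsCycle)
    (hsd : #(w.support.toFinset.filter fun z => 2 < degIn G R z) ≤ 1) :
    IsInducedCycle G w.support.toFinset := by
  have hCR : ∀ z ∈ w.support, z ∈ R := fun z hz => mem_of_mem_support_of_isCycle hw hz
  refine ⟨?_, fun v hv => le_antisymm ?_ ?_⟩
  · have hset : {v | v ∈ (w.mapLe restrict_le).support} = (w.support.toFinset : Set V) := by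
      ext z
      simp
    exact hset ▸ (w.mapLe restrict_le).connected_induce_support
  · obtain ⟨b, -, hb⟩ := exists_forall_ne_degIn_eq_two hclean hw hsd
    have hv' := List.mem_toFinset.mp hv
    by_cases hvb : v = b
    · subst hvb
      refine card_walkNbrs_of_isCycle hw hv' ▸ card_le_card fun z hz => ?_
      obtain ⟨hzC, hvz⟩ := mem_filter.mp hz
      have hzv : z ≠ v := hvz.ne.symm
      have := mem_edges_of_degIn_eq_two subset_rfl hw (List.mem_toFinset.mp hzC)
        (hb z (List.mem_toFinset.mp hzC) hzv) hvz.symm (hCR v hv')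
      exact mem_filter.mpr ⟨mem_univ _, by rwa [Sym2.eq_swap]⟩
    · exact hb v hv' hvb ▸ degIn_mono (fun z hz => hCR z (List.mem_toFinset.mp hz)) v
  · let w' := w.transfer (restrict G w.support.toFinset)
      fun _ => mem_edgeSet_restrict restrict_le fun z hz => List.mem_toFinset.mpr hz
    exact two_le_degIn_of_isCycle (K := w') (hw.transfer _)
      (by rwa [Walk.support_transfer, ← List.mem_toFinset])

lemma card_inter_support_le_two (hclean : ∀ v ∈ R, 2 ≤ degIn G R v) (hw : w.IsCycle)
    (hsd : #(w.support.toFinset.filter fun z => 2 < degIn G R z) ≤ 1)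
    (hF : IsMinimalFVSOn G R F) :
    #(F ∩ w.support.toFinset) ≤ 2 := by
  by_contra! h3
  obtain ⟨b, hbw, hb⟩ := exists_forall_ne_degIn_eq_two hclean hw hsd
  have hcard : 1 < #((F ∩ w.support.toFinset).erase b) := by
    have := pred_card_le_card_erase (s := F ∩ w.support.toFinset) (a := b)
    omega
  obtain ⟨u₁, hu₁, u₂, hu₂, hne⟩ := one_lt_card.mp hcard
  simp only [mem_erase, mem_inter, List.mem_toFinset] at hu₁ hu₂
  obtain ⟨K, hK⟩ := hF.exists_isCycle hu₁.2.1
  obtain ⟨p, hp⟩ := exists_walk_avoiding_of_isCycle hw hbw hu₁.2.2 hu₂.2.2 hu₁.1 hu₂.1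
  have hu₂K : u₂ ∈ K.support := prop_end_of_adj_closed p hp
    (fun z z' hzz' hz hzK => K.snd_mem_support_of_mem_edges
      (mem_edges_of_degIn_eq_two sdiff_subset hK hzK (hb z hz.1 hz.2) hzz'.1 hzz'.2.2))
    K.start_mem_support
  have := mem_of_mem_support_of_isCycle hK hu₂K
  simp only [mem_sdiff, mem_erase] at this
  exact this.2 ⟨hne.symm, hu₂.2.1⟩

end SemiDisjoint

section Density

variable {G : SimpleGraph V} {R F T : Finset V}

lemma reachable_induce_of_walk {H : SimpleGraph V} {S : Set V} {a b : V} (hH : H ≤ G)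
    (p : H.Walk a b) (hp : ∀ z ∈ p.support, z ∈ S) :
    (G.induce S).Reachable ⟨a, hp a p.start_mem_support⟩ ⟨b, hp b p.end_mem_support⟩ := by
  have hsub : {z | z ∈ (p.mapLe hH).support} ⊆ S := fun z hz => hp z (by simpa using hz)
  exact ((p.mapLe hH).connected_induce_support.preconnected
    ⟨a, by simp⟩ ⟨b, by simp⟩).map (G.induceHomOfLE hsub).toHom

noncomputable def componentOn (G : SimpleGraph V) (T : Finset V)
    (j : (restrict G T).ConnectedComponent) : Finset V :=
  T.filter fun z => (restrict G T).connectedComponentMk z = j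

variable {j : (restrict G T).ConnectedComponent}

lemma mem_componentOn {z : V} :
    z ∈ componentOn G T j ↔ z ∈ T ∧ (restrict G T).connectedComponentMk z = j :=
  mem_filter

lemma componentOn_subset : componentOn G T j ⊆ T := filter_subset _ _

lemma mem_componentOn_of_reachable {z z' : V} (hz : z ∈ componentOn G T j) (hz' : z' ∈ T)
    (h : (restrict G T).Reachable z z') : z' ∈ componentOn G T j :=
  mem_componentOn.mpr ⟨hz', (ConnectedComponent.eq.mpr h).symm.trans (mem_componentOn.mp hz).2⟩

lemma isTree_induce_componentOn (hT : AcyclicOn G T) (hne : (componentOn G T j).Nonempty) :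
    (G.induce (componentOn G T j : Set V)).IsTree := by
  have : Nonempty (componentOn G T j : Set V) := ⟨⟨hne.choose, hne.choose_spec⟩⟩
  refine ⟨⟨?_⟩, ?_⟩
  · rintro ⟨a, ha⟩ ⟨b, hb⟩
    obtain ⟨p⟩ : (restrict G T).Reachable a b := ConnectedComponent.eq.mp
      ((mem_componentOn.mp ha).2.trans (mem_componentOn.mp hb).2.symm)
    have hp : ∀ z ∈ p.support, z ∈ componentOn G T j := fun z hz =>
      mem_componentOn_of_reachable ha
        (mem_of_mem_support_restrict p (mem_componentOn.mp ha).1 hz) ⟨p.takeUntil z hz⟩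
    exact reachable_induce_of_walk restrict_le p hp
  · let ι : G.induce (componentOn G T j : Set V) →g restrict G T :=
      ⟨Subtype.val, fun {a b} h => ⟨h, componentOn_subset a.2, componentOn_subset b.2⟩⟩
    exact hT.comap ι Subtype.val_injective

variable [Fintype V]

lemma degIn_componentOn {z : V} (hz : z ∈ componentOn G T j) :
    degIn G (componentOn G T j) z = degIn G T z := by
  refine le_antisymm (degIn_mono componentOn_subset z) (card_le_card fun a ha => ?_)
  obtain ⟨haT, hza⟩ := mem_filter.mp ha
  exact mem_filter.mpr ⟨mem_componentOn_of_reachable hz haT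
    (Adj.reachable ⟨hza, componentOn_subset hz, haT⟩), hza⟩

lemma sum_degIn_componentOn_add_two (hFR : F ⊆ R) (hT : AcyclicOn G (R \ F))
    {j : (restrict G (R \ F)).ConnectedComponent} (hne : (componentOn G (R \ F) j).Nonempty) :
    ∑ z ∈ componentOn G (R \ F) j, degIn G R z + 2 =
      2 * #(componentOn G (R \ F) j) + ∑ v ∈ F, degIn G (componentOn G (R \ F) j) v := by
  set S := componentOn G (R \ F) j
  have hsplit : ∀ z ∈ S, degIn G R z = degIn G S z + degIn G F z := fun z hz => by
    rw [degIn_eq_degIn_sdiff_add_degIn hFR, degIn_componentOn hz]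
  rw [sum_congr rfl hsplit, sum_add_distrib, sum_degIn_eq_two_mul_edgesIn, sum_degIn_comm S F,
    card_eq_edgesIn_add_one (isTree_induce_componentOn hT hne)]
  ring

/-- The component is the one containing the rest of a cycle through `v` in `G[R \ (F - v)]`;
it has a vertex of degree other than `2`, since that cycle is not semi-disjoint. -/
lemma IsMinimalFVSOn.exists_componentOn (hnosdc : ¬ HasSemiDisjointCycle (restrict G R))
    (hF : IsMinimalFVSOn G R F) {v : V} (hv : v ∈ F) :
    ∃ j : (restrict G (R \ F)).ConnectedComponent,
      2 ≤ degIn G (componentOn G (R \ F) j) v ∧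
        ∃ z ∈ componentOn G (R \ F) j, degIn G R z ≠ 2 := by
  obtain ⟨K, hK⟩ := hF.exists_isCycle hv
  have hT : ∀ z ∈ K.support, z ≠ v → z ∈ R \ F := fun z hz hzv => by
    have := mem_of_mem_support_of_isCycle hK hz
    simp only [mem_sdiff, mem_erase, not_and] at this ⊢
    exact ⟨this.1, fun hzF => this.2 hzv hzF⟩
  have hnbr : ∀ z ∈ walkNbrs K v, z ∈ K.support ∧ z ≠ v ∧ G.Adj v z := fun z hz => by
    have he := (mem_filter.mp hz).2
    have hadj := K.adj_of_mem_edges he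
    exact ⟨K.snd_mem_support_of_mem_edges he, hadj.ne.symm, hadj.1⟩
  obtain ⟨a, ha⟩ : (walkNbrs K v).Nonempty :=
    card_pos.mp (by rw [card_walkNbrs_of_isCycle hK K.start_mem_support]; omega)
  obtain ⟨haK, hav, -⟩ := hnbr a ha
  set j := (restrict G (R \ F)).connectedComponentMk a
  have haS : a ∈ componentOn G (R \ F) j := mem_componentOn.mpr ⟨hT a haK hav, rfl⟩
  have hKS : ∀ z ∈ K.support, z ≠ v → z ∈ componentOn G (R \ F) j := fun z hz hzv => by
    obtain ⟨p, hp⟩ := exists_walk_avoiding_of_isCycle hK K.start_mem_support haK hz hav hzv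
    exact mem_componentOn_of_reachable haS (hT z hz hzv)
      (reachable_restrict restrict_le p fun y hy => hT y (hp y hy).1 (hp y hy).2)
  refine ⟨j, ?_, ?_⟩
  · rw [← card_walkNbrs_of_isCycle hK K.start_mem_support]
    exact card_le_card fun z hz =>
      mem_filter.mpr ⟨hKS z (hnbr z hz).1 (hnbr z hz).2.1, (hnbr z hz).2.2⟩
  · by_contra! hdeg
    have hle : restrict G (R \ F.erase v) ≤ restrict G R := restrict_mono sdiff_subset
    refine hnosdc ⟨v, K.mapLe hle, hK.mapLe hle, ?_⟩
    rw [filter_degree_restrict_eq (hK.mapLe hle)]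
    refine (card_le_card fun z hz => ?_).trans (card_singleton v).le
    obtain ⟨hzK, hz2⟩ := mem_filter.mp hz
    rw [List.mem_toFinset, Walk.support_mapLe_eq_support] at hzK
    by_contra hzv
    exact absurd (hdeg z (hKS z hzK (mem_singleton.not.mp hzv))) hz2.ne'

lemma card_filter_add_two_mul_card_le (hclean : ∀ v ∈ R, 2 ≤ degIn G R v) (hFR : F ⊆ R)
    (hT : AcyclicOn G (R \ F)) (comp : V → (restrict G (R \ F)).ConnectedComponent)
    (hcomp : ∀ v ∈ F, 2 ≤ degIn G (componentOn G (R \ F) (comp v)) v ∧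
      ∃ z ∈ componentOn G (R \ F) (comp v), degIn G R z ≠ 2)
    {j : (restrict G (R \ F)).ConnectedComponent} (hne : (componentOn G (R \ F) j).Nonempty) :
    #(F.filter (comp · = j)) + 2 * #(componentOn G (R \ F) j) ≤
      ∑ z ∈ componentOn G (R \ F) j, degIn G R z := by
  set S := componentOn G (R \ F) j
  set Fc := F.filter (comp · = j)
  have hsum : ∑ z ∈ S, degIn G R z + 2 = 2 * #S + ∑ v ∈ F, degIn G S v :=
    sum_degIn_componentOn_add_two hFR hT hne
  have hSdeg : ∀ z ∈ S, 2 ≤ degIn G R z :=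
    fun z hz => hclean z (sdiff_subset (componentOn_subset hz))
  have hcompFc : ∀ v ∈ Fc, 2 ≤ degIn G S v ∧ ∃ z ∈ S, degIn G R z ≠ 2 := fun v hv => by
    obtain ⟨hvF, rfl⟩ := mem_filter.mp hv
    exact hcomp v hvF
  have hlow : 2 * #S ≤ ∑ z ∈ S, degIn G R z := by
    simpa [mul_comm] using card_nsmul_le_sum S _ 2 hSdeg
  have hFc : 2 * #Fc ≤ ∑ v ∈ F, degIn G S v := calc
    2 * #Fc ≤ ∑ v ∈ Fc, degIn G S v := by
      simpa [mul_comm] using card_nsmul_le_sum Fc _ 2 fun v hv => (hcompFc v hv).1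
    _ ≤ ∑ v ∈ F, degIn G S v := sum_le_sum_of_subset (filter_subset _ _)
  have hone : #Fc = 1 → 2 * #S < ∑ z ∈ S, degIn G R z := fun h1 => by
    obtain ⟨v, hv⟩ := card_eq_one.mp h1
    obtain ⟨z, hzS, hz⟩ := (hcompFc v (hv ▸ mem_singleton_self v)).2
    calc 2 * #S = ∑ _z ∈ S, 2 := by rw [sum_const, smul_eq_mul, mul_comm]
      _ < ∑ z ∈ S, degIn G R z :=
        sum_lt_sum hSdeg ⟨z, hzS, lt_of_le_of_ne (hSdeg z hzS) (Ne.symm hz)⟩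
  by_cases h1 : #Fc = 1
  · have := hone h1
    omega
  · omega

theorem sum_degIn_add_two_mul_card_le (hclean : ∀ v ∈ R, 2 ≤ degIn G R v)
    (hnosdc : ¬ HasSemiDisjointCycle (restrict G R)) (hF : IsMinimalFVSOn G R F) :
    ∑ v ∈ F, degIn G R v + 2 * #R ≤ 2 * edgesIn G R + #F := by
  choose! comp hcomp using fun v (hv : v ∈ F) => hF.exists_componentOn hnosdc hv
  set I := (R \ F).image (restrict G (R \ F)).connectedComponentMk
  have hmapsT : ∀ z ∈ R \ F, (restrict G (R \ F)).connectedComponentMk z ∈ I :=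
    fun z hz => mem_image_of_mem _ hz
  have hmapsF : ∀ v ∈ F, comp v ∈ I := fun v hv => by
    obtain ⟨z, hz⟩ := card_pos.mp (lt_of_lt_of_le two_pos (hcomp v hv).1)
    obtain ⟨hzT, hzc⟩ := mem_componentOn.mp (mem_filter.mp hz).1
    exact hzc ▸ hmapsT z hzT
  have hne : ∀ j ∈ I, (componentOn G (R \ F) j).Nonempty := fun j hj => by
    obtain ⟨z, hz, rfl⟩ := mem_image.mp hj
    exact ⟨z, mem_componentOn.mpr ⟨hz, rfl⟩⟩
  have htrees : #F + 2 * #(R \ F) ≤ ∑ z ∈ R \ F, degIn G R z := by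
    rw [card_eq_sum_card_fiberwise hmapsF, card_eq_sum_card_fiberwise hmapsT,
      ← sum_fiberwise_of_maps_to hmapsT, mul_sum, ← sum_add_distrib]
    exact sum_le_sum fun j hj =>
      card_filter_add_two_mul_card_le hclean hF.subset hF.acyclicOn comp hcomp (hne j hj)
  have hR := sum_degIn_eq_two_mul_edgesIn (G := G) R
  rw [← sum_sdiff hF.subset] at hR
  have := card_sdiff_add_card_eq_card hF.subset
  omega

end Density

section LocalRatio

variable {G : SimpleGraph V} {x c : V → ℝ} {R : Finset V}

def HasTwoApproxFVS (G : SimpleGraph V) (x : V → ℝ) (R : Finset V) (c : V → ℝ) : Prop :=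
  ∃ F ⊆ R, AcyclicOn G (R \ F) ∧ ∑ u ∈ F, c u ≤ 2 * ∑ u ∈ R, c u * x u

lemma hasTwoApproxFVS_of_acyclicOn (hx : ∀ u, 0 ≤ x u) (hc : ∀ u, 0 ≤ c u)
    (h : AcyclicOn G R) : HasTwoApproxFVS G x R c :=
  ⟨∅, empty_subset R, by rwa [sdiff_empty], by
    simpa using sum_nonneg fun u _ => mul_nonneg (hc u) (hx u)⟩

lemma HasTwoApproxFVS.of_erase_of_eq_zero {v : V} (hv : v ∈ R) (hcv : c v = 0)
    (h : HasTwoApproxFVS G x (R.erase v) c) : HasTwoApproxFVS G x R c := by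
  obtain ⟨F, hFR, hF, hcost⟩ := h
  have hvF : v ∉ F := fun hvF => (mem_erase.mp (hFR hvF)).1 rfl
  refine ⟨insert v F, insert_subset hv ((hFR.trans (erase_subset v R))), ?_, ?_⟩
  · rwa [sdiff_insert, ← erase_sdiff_comm]
  · rw [sum_insert hvF, hcv, zero_add, ← add_sum_erase R _ hv, hcv, zero_mul, zero_add]
    exact hcost

lemma acyclicOn_of_erase_of_degIn_le_one [Fintype V] {A : Finset V} {v : V}
    (hdeg : degIn G A v ≤ 1) (h : AcyclicOn G (A.erase v)) : AcyclicOn G A := by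
  intro u K hK
  by_cases hvK : v ∈ K.support
  · have := two_le_degIn_of_isCycle hK hvK
    omega
  · exact not_acyclicOn_of_isCycle restrict_le hK (fun z hz => mem_erase.mpr
      ⟨fun hzv : z = v => hvK (hzv ▸ hz), mem_of_mem_support_of_isCycle hK hz⟩) h

lemma HasTwoApproxFVS.of_erase_of_degIn_le_one [Fintype V] (hx : ∀ u, 0 ≤ x u)
    (hc : ∀ u, 0 ≤ c u) {v : V} (hdeg : degIn G R v ≤ 1) (h : HasTwoApproxFVS G x (R.erase v) c) :
    HasTwoApproxFVS G x R c := by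
  obtain ⟨F, hFR, hF, hcost⟩ := h
  refine ⟨F, hFR.trans (erase_subset v R), ?_, ?_⟩
  · refine acyclicOn_of_erase_of_degIn_le_one ((degIn_mono sdiff_subset v).trans hdeg) ?_
    rwa [← erase_sdiff_comm]
  · refine hcost.trans (mul_le_mul_of_nonneg_left ?_ zero_le_two)
    exact sum_le_sum_of_subset_of_nonneg (erase_subset v R)
      fun u _ _ => mul_nonneg (hc u) (hx u)

lemma HasTwoApproxFVS.of_sub {φ : V → ℝ} {t : ℝ} (ht : 0 ≤ t) (hc' : ∀ u, 0 ≤ c u - t * φ u)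
    (hratio : ∀ F, IsMinimalFVSOn G R F → ∑ u ∈ F, φ u ≤ 2 * ∑ u ∈ R, φ u * x u)
    (h : HasTwoApproxFVS G x R fun u => c u - t * φ u) : HasTwoApproxFVS G x R c := by
  obtain ⟨F, hFR, hF, hcost⟩ := h
  obtain ⟨F₀, hF₀F, hF₀⟩ := exists_isMinimalFVSOn_subset hFR hF
  refine ⟨F₀, hF₀.subset, hF₀.acyclicOn, ?_⟩
  have hprune : ∑ u ∈ F₀, (c u - t * φ u) ≤ ∑ u ∈ F, (c u - t * φ u) :=
    sum_le_sum_of_subset_of_nonneg hF₀F fun u _ _ => hc' u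
  have hF₀cost : ∑ u ∈ F₀, c u = ∑ u ∈ F₀, (c u - t * φ u) + t * ∑ u ∈ F₀, φ u := by
    rw [mul_sum, ← sum_add_distrib]
    simp
  have hRcost : ∑ u ∈ R, c u * x u =
      ∑ u ∈ R, (c u - t * φ u) * x u + t * ∑ u ∈ R, φ u * x u := by
    rw [mul_sum, ← sum_add_distrib]
    exact sum_congr rfl fun u _ => by ring
  have := mul_le_mul_of_nonneg_left (hratio F₀ hF₀) ht
  linarith

lemma exists_sub_mul_nonneg_eq_zero {S : Finset V} (hS : S.Nonempty) {φ : V → ℝ}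
    (hc : ∀ u, 0 ≤ c u) (hφS : ∀ u ∈ S, 0 < φ u) (hφ : ∀ u ∉ S, φ u = 0) :
    ∃ t, 0 ≤ t ∧ (∀ u, 0 ≤ c u - t * φ u) ∧ ∃ v ∈ S, c v - t * φ v = 0 := by
  obtain ⟨v, hv, hmin⟩ := exists_min_image S (fun u => c u / φ u) hS
  refine ⟨c v / φ v, div_nonneg (hc v) (hφS v hv).le, fun u => ?_, v, hv, ?_⟩
  · by_cases hu : u ∈ S
    · have := (le_div_iff₀ (hφS u hu)).mp (hmin u hu)
      linarith
    · simp [hφ u hu, hc u]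
  · rw [div_mul_cancel₀ _ (hφS v hv).ne']
    ring

lemma hasTwoApproxFVS_of_localRatio (hc : ∀ u, 0 ≤ c u) {S : Finset V} (hSR : S ⊆ R)
    (hS : S.Nonempty) {φ : V → ℝ} (hφS : ∀ u ∈ S, 0 < φ u) (hφ : ∀ u ∉ S, φ u = 0)
    (hratio : ∀ F, IsMinimalFVSOn G R F → ∑ u ∈ F, φ u ≤ 2 * ∑ u ∈ R, φ u * x u)
    (ih : ∀ c' : V → ℝ, (∀ u, 0 ≤ c' u) → (∃ v ∈ R, c' v = 0) → HasTwoApproxFVS G x R c') :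
    HasTwoApproxFVS G x R c := by
  obtain ⟨t, ht, hc', v, hv, hv0⟩ := exists_sub_mul_nonneg_eq_zero hS hc hφS hφ
  exact (ih _ hc' ⟨v, hSR hv, hv0⟩).of_sub ht hc' hratio

end LocalRatio

section Ratios

variable [Fintype V] {G : SimpleGraph V} {x : V → ℝ} {R F : Finset V}

lemma sum_ite_mem_support_le (hx2 : PCycleCover G x) (hclean : ∀ v ∈ R, 2 ≤ degIn G R v)
    {u : V} {w : (restrict G R).Walk u u} (hw : w.IsCycle)
    (hsd : #(w.support.toFinset.filter fun z => 2 < degIn G R z) ≤ 1)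
    (hF : IsMinimalFVSOn G R F) :
    ∑ v ∈ F, (if v ∈ w.support.toFinset then 1 else 0 : ℝ) ≤
      2 * ∑ v ∈ R, (if v ∈ w.support.toFinset then 1 else 0) * x v := by
  have hCR : w.support.toFinset ⊆ R :=
    fun z hz => mem_of_mem_support_of_isCycle hw (List.mem_toFinset.mp hz)
  have hcover := hx2.2 _ (isInducedCycle_support hclean hw hsd)
  have hcard : (#(F ∩ w.support.toFinset) : ℝ) ≤ 2 := by
    exact_mod_cast card_inter_support_le_two hclean hw hsd hF
  rw [sum_boole, filter_mem_eq_inter]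
  simp only [ite_mul, one_mul, zero_mul]
  rw [sum_ite_mem, inter_eq_right.mpr hCR]
  linarith

lemma sum_rowWD_le (hx : PWD G x) (hclean : ∀ v ∈ R, 2 ≤ degIn G R v)
    (hnosdc : ¬ HasSemiDisjointCycle (restrict G R)) (hF : IsMinimalFVSOn G R F) :
    ∑ v ∈ F, rowWD G R v ≤ 2 * ∑ v ∈ R, rowWD G R v * x v := by
  have hbound : (∑ v ∈ F, degIn G R v : ℝ) + 2 * #R ≤ 2 * edgesIn G R + #F := by
    exact_mod_cast sum_degIn_add_two_mul_card_le hclean hnosdc hF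
  have hFrow : ∑ v ∈ F, rowWD G R v = ∑ v ∈ F, (degIn G R v : ℝ) - #F := by
    have hrow : ∀ v ∈ F, rowWD G R v = (degIn G R v : ℝ) - 1 :=
      fun v hv => if_pos (hF.subset hv)
    rw [sum_congr rfl hrow, sum_sub_distrib, sum_const, nsmul_eq_mul, mul_one]
  have hRrow : ∑ v ∈ R, rowWD G R v * x v = ∑ v ∈ R, ((degIn G R v : ℝ) - 1) * x v :=
    sum_congr rfl fun v hv => by rw [rowWD, if_pos hv]
  have := hx.2 R
  rw [hFrow, hRrow]
  linarith

end Ratios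

lemma hasTwoApproxFVS_of_two_le_degIn [Fintype V] {G : SimpleGraph V} {x c : V → ℝ}
    {R : Finset V} (hx : PWD G x) (hx2 : PCycleCover G x) (hc : ∀ u, 0 ≤ c u)
    (hRne : R.Nonempty) (hclean : ∀ v ∈ R, 2 ≤ degIn G R v)
    (ih : ∀ c' : V → ℝ, (∀ u, 0 ≤ c' u) → (∃ v ∈ R, c' v = 0) → HasTwoApproxFVS G x R c') :
    HasTwoApproxFVS G x R c := by
  by_cases hsdc : HasSemiDisjointCycle (restrict G R)
  · obtain ⟨u, w, hw, hsd⟩ := hsdc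
    rw [filter_degree_restrict_eq hw] at hsd
    exact hasTwoApproxFVS_of_localRatio hc
      (fun z hz => mem_of_mem_support_of_isCycle hw (List.mem_toFinset.mp hz))
      ⟨u, List.mem_toFinset.mpr w.start_mem_support⟩ (fun v hv => by simp [hv])
      (fun v hv => by simp [hv]) (fun F hF => sum_ite_mem_support_le hx2 hclean hw hsd hF) ih
  · refine hasTwoApproxFVS_of_localRatio hc subset_rfl hRne (φ := rowWD G R) (fun v hv => ?_)
      (fun v hv => if_neg hv) (fun F hF => sum_rowWD_le hx hclean hsdc hF) ih
    have : (2 : ℝ) ≤ degIn G R v := by exact_mod_cast hclean v hv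
    rw [rowWD, if_pos hv]
    linarith

theorem hasTwoApproxFVS [Fintype V] {G : SimpleGraph V} {x : V → ℝ} (hx : PWD G x)
    (hx2 : PCycleCover G x) (R : Finset V) (c : V → ℝ) (hc : ∀ u, 0 ≤ c u) :
    HasTwoApproxFVS G x R c := by
  induction hn : #R + #(R.filter (c · ≠ 0)) using Nat.strong_induction_on generalizing R c with
  | _ n ih =>
  have ih_erase : ∀ v ∈ R, HasTwoApproxFVS G x (R.erase v) c := fun v hv => by
    refine ih _ ?_ _ c hc rfl
    have := card_erase_add_one hv
    have := card_le_card (filter_subset_filter (c · ≠ 0) (erase_subset v R))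
    omega
  by_cases hacyc : AcyclicOn G R
  · exact hasTwoApproxFVS_of_acyclicOn hx.1 hc hacyc
  by_cases hzero : ∃ v ∈ R, c v = 0
  · obtain ⟨v, hv, hcv⟩ := hzero
    exact (ih_erase v hv).of_erase_of_eq_zero hv hcv
  by_cases hlow : ∃ v ∈ R, degIn G R v ≤ 1
  · obtain ⟨v, hv, hdeg⟩ := hlow
    exact (ih_erase v hv).of_erase_of_degIn_le_one hx.1 hc hdeg
  push Not at hzero hlow
  have hRne : R.Nonempty := nonempty_iff_ne_empty.mpr fun h => hacyc (h ▸ acyclicOn_empty)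
  refine hasTwoApproxFVS_of_two_le_degIn hx hx2 hc hRne hlow fun c' hc' ⟨v, hv, hc'v⟩ => ?_
  refine ih _ ?_ R c' hc' rfl
  have hsub : R.filter (c' · ≠ 0) ⊆ R.erase v := fun u hu =>
    mem_erase.mpr ⟨fun h => (mem_filter.mp hu).2 (h ▸ hc'v), (mem_filter.mp hu).1⟩
  have := card_le_card hsub
  have := card_erase_add_one hv
  rw [filter_true_of_mem hzero] at hn
  omega

lemma isFVS_of_acyclicOn [Fintype V] {G : SimpleGraph V} {F : Finset V}
    (h : AcyclicOn G (univ \ F)) : IsFVS G F := by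
  let ι : G.induce {v | v ∉ F} →g restrict G (univ \ F) :=
    ⟨Subtype.val, fun {a b} hab => ⟨hab, mem_sdiff.mpr ⟨mem_univ _, a.2⟩,
      mem_sdiff.mpr ⟨mem_univ _, b.2⟩⟩⟩
  exact h.comap ι Subtype.val_injective

/-- for every `x ∈ P_WD(G) ∩ P_cycle-cover(G)` there is a feedback vertex
set `F` with `Σ_{u ∈ F} c(u) ≤ 2 Σ_{u ∈ V} c(u) x_u`; hence the integrality gap of
this LP relaxation of FVS is at most `2`. -/
theorem stmt_3 {V : Type*} [Fintype V] (G : SimpleGraph V)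
    (c : V → ℝ) (hc : ∀ u, 0 ≤ c u)
    (x : V → ℝ) (hx : PWD G x) (hx2 : PCycleCover G x) :
    ∃ F : Finset V, IsFVS G F ∧ ∑ u ∈ F, c u ≤ 2 * ∑ u, c u * x u := by
  obtain ⟨F, -, hF, hcost⟩ := hasTwoApproxFVS hx hx2 univ c hc
  exact ⟨F, isFVS_of_acyclicOn hF, hcost⟩

end FVS
end

section
/- Let G=(V,E) be a finite undirected graph with minimum degree at least 2 that contains no semi-disjoint cycles. Then for every (inclusion-wise) minimal feedback vertex set F of G, Σ_{v∈F}(d(v) − 1) ≤ 2(|E| − |V|), where d(v) denotes the degree of v in G. -/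
/- Common definitions for the polyhedral study of FVS / PFDS. -/

open scoped Classical
open Finset

/-!
Let `H = G - F`, a forest, and for a component `S` of `H` let `k(S)` count the vertices of `F`
with at least two neighbours in `S`. Since `S` is a tree and all degrees are at least 2, the
number of edges leaving `S` is `Σ_{u ∈ S} d(u) - 2(|S| - 1) ≥ 2`; it is also at least `2 k(S)`,
and it cannot equal 2 when `k(S) = 1`, for then all of `S` has degree 2 and the vertex counted by
`k(S)` closes a semi-disjoint cycle. Hence `Σ_{u ∈ S} d(u) ≥ 2|S| + k(S)`. By minimality of `F`
every `v ∈ F` has two neighbours in a common component (they lie on a cycle of `G - (F - v)`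
through `v`), so `Σ_S k(S) ≥ |F|`, and summing over components gives
`Σ_{u ∉ F} d(u) ≥ 2(|V| - |F|) + |F|`; the handshake lemma turns this into the bound.
-/

namespace FVS

open SimpleGraph

variable {V : Type*} {G : SimpleGraph V}

lemma exists_adj_adj_walk_of_isCycle {v : V} {c : G.Walk v v} (hc : c.IsCycle) :
    ∃ a b, a ≠ b ∧ G.Adj v a ∧ G.Adj v b ∧
      ∃ p : G.Walk a b, v ∉ p.support ∧ ∀ u ∈ p.support, u ∈ c.support := by
  cases c with
  | nil => exact absurd hc Walk.not_isCycle_nil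
  | @cons _ a _ hva p =>
    rw [Walk.cons_isCycle_iff] at hc
    obtain ⟨b, hvb, q, hq⟩ := Walk.exists_eq_cons_of_ne hva.ne p.reverse
    have hqpath : (Walk.cons hvb q).IsPath := hq ▸ hc.1.reverse
    rw [Walk.cons_isPath_iff] at hqpath
    refine ⟨a, b, ?_, hva, hvb, q.reverse, by simpa using hqpath.2, fun u hu => ?_⟩
    · rintro rfl
      have hqnil : q = Walk.nil := Walk.isPath_iff_nil.1 hqpath.1 |>.eq_nil
      apply hc.2
      rw [← List.mem_reverse, ← Walk.edges_reverse, hq, hqnil]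
      simp
    · have hu' : u ∈ p.reverse.support := by
        rw [hq, Walk.support_cons]
        exact List.mem_cons_of_mem _ (by simpa using hu)
      rw [Walk.support_reverse, List.mem_reverse] at hu'
      exact List.mem_cons_of_mem _ hu'

variable [Fintype V]

lemma hasSemiDisjointCycle_of_walk {v a b : V} (hab : a ≠ b)
    (hva : G.Adj v a) (hvb : G.Adj v b) (p : G.Walk a b) (hv : v ∉ p.support)
    (hdeg : ∀ u ∈ p.support, G.degree u ≤ 2) : HasSemiDisjointCycle G := by
  set q := p.bypass
  have hvq : v ∉ q.support := fun h => hv (p.support_bypass_subset_support h)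
  have hcycle : (Walk.cons hva (q.concat hvb.symm)).IsCycle := by
    refine (Walk.cons_isCycle_iff _ _).2 ⟨p.bypass_isPath.concat hvq _, ?_⟩
    rw [Walk.edges_concat, List.concat_eq_append, List.mem_append, List.mem_singleton,
      Sym2.eq_iff]
    rintro (h | ⟨rfl, -⟩ | ⟨-, rfl⟩)
    · exact hvq (q.fst_mem_support_of_mem_edges h)
    · exact hvq q.end_mem_support
    · exact hab rfl
  refine ⟨v, _, hcycle, (Finset.card_le_card (t := {v}) ?_).trans (Finset.card_singleton v).le⟩
  intro u hu
  simp only [Finset.mem_filter, List.mem_toFinset, Walk.support_cons, Walk.support_concat,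
    List.mem_cons, List.mem_append, List.not_mem_nil, or_false] at hu
  obtain ⟨(rfl | hu | rfl), hdu⟩ := hu
  · exact Finset.mem_singleton_self u
  · exact absurd (hdeg u (p.support_bypass_subset_support hu)) hdu.not_ge
  · exact Finset.mem_singleton_self u

lemma hasSemiDisjointCycle_of_two_le_degIn {S : Finset V} (hS : (G.induce (S : Set V)).Connected)
    (hdeg : ∀ u ∈ S, G.degree u ≤ 2) {v : V} (hv : v ∉ S) (hvS : 2 ≤ degIn G S v) :
    HasSemiDisjointCycle G := by
  obtain ⟨a, ha, b, hb, hab⟩ := Finset.one_lt_card.1 hvS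
  rw [Finset.mem_filter] at ha hb
  obtain ⟨q⟩ := hS.preconnected ⟨a, ha.1⟩ ⟨b, hb.1⟩
  have hqS : ∀ u ∈ (q.map (Embedding.induce (S : Set V)).toHom).support, u ∈ S := by
    intro u hu
    rw [Walk.support_map, List.mem_map] at hu
    obtain ⟨x, -, rfl⟩ := hu
    exact x.2
  exact hasSemiDisjointCycle_of_walk hab ha.2 hb.2 _ (fun h => hv (hqS v h))
    (fun u hu => hdeg u (hqS u hu))

lemma sum_degIn_comm_s5 (S T : Finset V) : ∑ u ∈ S, degIn G T u = ∑ v ∈ T, degIn G S v := by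
  simpa [degIn, Finset.bipartiteAbove, Finset.bipartiteBelow, adj_comm] using
    Finset.sum_card_bipartiteAbove_eq_sum_card_bipartiteBelow (s := S) (t := T) (r := G.Adj)

lemma degIn_add_degIn_compl (S : Finset V) (u : V) : degIn G S u + degIn G Sᶜ u = G.degree u := by
  rw [← card_neighborFinset_eq_degree, neighborFinset_eq_filter, degIn, degIn,
    ← Finset.card_union_of_disjoint (Finset.disjoint_filter_filter disjoint_compl_right),
    ← Finset.filter_union, Finset.union_compl]

lemma degree_induce_eq_degIn (S : Finset V) (u : (S : Set V)) :
    (G.induce (S : Set V)).degree u = degIn G S u := by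
  rw [← card_neighborFinset_eq_degree, ← Finset.card_map (.subtype _), degIn]
  convert congrArg Finset.card (G.map_neighborFinset_induce u) using 2
  · convert rfl
  · ext w
    simp [and_comm]

lemma sum_degIn_add_two_of_isTree {S : Finset V} (hS : (G.induce (S : Set V)).IsTree) :
    ∑ u ∈ S, degIn G S u + 2 = 2 * #S := by
  have hedges := hS.card_edgeFinset
  have hsum := (G.induce (S : Set V)).sum_degrees_eq_twice_card_edges
  simp only [degree_induce_eq_degIn, Finset.sum_finset_coe (degIn G S) S] at hsum
  have hcard : Fintype.card (S : Set V) = #S := by simp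
  omega

lemma sum_degree_add_two_of_isTree {S : Finset V} (hS : (G.induce (S : Set V)).IsTree) :
    ∑ u ∈ S, G.degree u + 2 = 2 * #S + ∑ v ∈ Sᶜ, degIn G S v := by
  have hsplit : ∑ u ∈ S, G.degree u = ∑ u ∈ S, degIn G S u + ∑ v ∈ Sᶜ, degIn G S v := by
    rw [← sum_degIn_comm_s5 S Sᶜ, ← Finset.sum_add_distrib]
    exact Finset.sum_congr rfl fun u _ => (degIn_add_degIn_compl S u).symm
  have := sum_degIn_add_two_of_isTree hS
  omega

theorem two_mul_card_add_card_le_sum_degree (hdeg : ∀ v, 2 ≤ G.degree v)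
    (hsd : ¬ HasSemiDisjointCycle G) {S : Finset V} (hS : (G.induce (S : Set V)).IsTree) :
    2 * #S + #{v ∈ Sᶜ | 2 ≤ degIn G S v} ≤ ∑ u ∈ S, G.degree u := by
  set k := #{v ∈ Sᶜ | 2 ≤ degIn G S v}
  have hsum := sum_degree_add_two_of_isTree hS
  have hS2 : #S • 2 ≤ ∑ u ∈ S, G.degree u := Finset.card_nsmul_le_sum _ _ _ fun u _ => hdeg u
  have hk2 : k • 2 ≤ ∑ v ∈ Sᶜ, degIn G S v :=
    (Finset.card_nsmul_le_sum _ _ _ fun v hv => (Finset.mem_filter.1 hv).2).trans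
      (Finset.sum_le_sum_of_subset (Finset.filter_subset _ _))
  rw [smul_eq_mul] at hS2 hk2
  -- The counts leave only `k = 1` with exactly two edges leaving `S`.
  by_contra hlt
  obtain ⟨v, hv⟩ : ∃ v, v ∈ ({v ∈ Sᶜ | 2 ≤ degIn G S v} : Finset V) :=
    Finset.card_pos.1 (by omega)
  rw [Finset.mem_filter, Finset.mem_compl] at hv
  refine hsd (hasSemiDisjointCycle_of_two_le_degIn hS.connected (fun u hu => ?_) hv.1 hv.2)
  have hsum_eq : ∑ u ∈ S, G.degree u = ∑ u ∈ S, 2 := by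
    rw [Finset.sum_const, smul_eq_mul]
    omega
  exact ((Finset.sum_eq_sum_iff_of_le fun u _ => hdeg u).1 hsum_eq.symm u hu).ge

section Components

variable {s : Set V}

noncomputable def componentVerts (C : (G.induce s).ConnectedComponent) : Finset V :=
  ({u | (G.induce s).connectedComponentMk u = C} : Finset s).map (.subtype _)

lemma mem_componentVerts {C : (G.induce s).ConnectedComponent} {u : V} :
    u ∈ componentVerts C ↔ ∃ h : u ∈ s, (G.induce s).connectedComponentMk ⟨u, h⟩ = C := by
  simp [componentVerts]

lemma isTree_induce_componentVerts (hs : (G.induce s).IsAcyclic)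
    (C : (G.induce s).ConnectedComponent) : (G.induce (componentVerts C : Set V)).IsTree := by
  let φ : C.toSimpleGraph ↪g G := (Embedding.induce s).comp (Embedding.induce C.supp)
  have hrange : (componentVerts C : Set V) = Set.range φ := by
    ext u
    rw [Finset.mem_coe, mem_componentVerts, Set.mem_range]
    constructor
    · rintro ⟨hu, hC⟩
      exact ⟨⟨⟨u, hu⟩, hC⟩, rfl⟩
    · rintro ⟨⟨⟨u, hu⟩, hC⟩, rfl⟩
      exact ⟨hu, hC⟩
  rw [hrange]
  exact φ.isoInduceRange.isTree_iff.1 (hs.isTree_connectedComponent C)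

lemma sum_eq_sum_componentVerts [Fintype (G.induce s).ConnectedComponent] {M : Type*}
    [AddCommMonoid M] {W : Finset V} (hW : ∀ u, u ∈ W ↔ u ∈ s) (f : V → M) :
    ∑ u ∈ W, f u = ∑ C : (G.induce s).ConnectedComponent, ∑ u ∈ componentVerts C, f u := by
  rw [Finset.sum_subtype W hW f,
    ← Finset.sum_fiberwise Finset.univ (G.induce s).connectedComponentMk]
  simp only [componentVerts, Finset.sum_map, Function.Embedding.coe_subtype]

end Components

lemma exists_adj_adj_reachable_of_minimal {F : Finset V} (hF : IsFVS G F)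
    (hmin : ∀ F' : Finset V, F' ⊂ F → ¬ IsFVS G F') {v : V} (hv : v ∈ F) :
    ∃ a b, ∃ (ha : a ∉ F) (hb : b ∉ F), a ≠ b ∧ G.Adj v a ∧ G.Adj v b ∧
      (G.induce {u | u ∉ F}).Reachable ⟨a, ha⟩ ⟨b, hb⟩ := by
  have hcyc := hmin (F.erase v) (Finset.erase_ssubset hv)
  simp only [IsFVS, IsAcyclic, not_forall, not_not] at hcyc
  obtain ⟨x, c, hc⟩ := hcyc
  let c' := c.map (Embedding.induce {u | u ∉ F.erase v}).toHom
  have hc' : c'.IsCycle := (Walk.isCycle_map_iff_of_injective Subtype.val_injective).2 hc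
  have hc'F : ∀ u ∈ c'.support, u ∉ F.erase v := by
    intro u hu
    rw [Walk.support_map, List.mem_map] at hu
    obtain ⟨y, -, rfl⟩ := hu
    exact y.2
  by_cases hvc : v ∈ c'.support
  · obtain ⟨a, b, hab, hva, hvb, p, hvp, hpc⟩ := exists_adj_adj_walk_of_isCycle (hc'.rotate hvc)
    have hpF : ∀ u ∈ p.support, u ∉ F := by
      intro u hu huF
      have hu' := (Walk.mem_support_rotate_iff c' v hvc).1 (hpc u hu)
      exact hc'F u hu' (Finset.mem_erase.2 ⟨fun h => hvp (h ▸ hu), huF⟩)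
    exact ⟨a, b, hpF a p.start_mem_support, hpF b p.end_mem_support, hab, hva, hvb,
      ⟨p.induce {u | u ∉ F} hpF⟩⟩
  · have hc'F' : ∀ u ∈ c'.support, u ∈ {u | u ∉ F} := fun u hu huF =>
      hc'F u hu (Finset.mem_erase.2 ⟨fun h => hvc (h ▸ hu), huF⟩)
    refine absurd ?_ (hF (c'.induce {u | u ∉ F} hc'F'))
    apply Walk.IsCycle.of_map (f := (Embedding.induce {u | u ∉ F}).toHom)
    rwa [Walk.map_induce]

lemma exists_two_le_degIn_componentVerts {F : Finset V} (hF : IsFVS G F)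
    (hmin : ∀ F' : Finset V, F' ⊂ F → ¬ IsFVS G F') {v : V} (hv : v ∈ F) :
    ∃ C : (G.induce {u | u ∉ F}).ConnectedComponent, 2 ≤ degIn G (componentVerts C) v := by
  obtain ⟨a, b, ha, hb, hab, hva, hvb, hab'⟩ := exists_adj_adj_reachable_of_minimal hF hmin hv
  refine ⟨(G.induce _).connectedComponentMk ⟨a, ha⟩, Finset.one_lt_card.2 ⟨a, ?_, b, ?_, hab⟩⟩
  · exact Finset.mem_filter.2 ⟨mem_componentVerts.2 ⟨ha, rfl⟩, hva⟩
  · exact Finset.mem_filter.2 ⟨mem_componentVerts.2 ⟨hb, (ConnectedComponent.sound hab').symm⟩, hvb⟩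

theorem sum_degree_add_two_mul_card_le (hdeg : ∀ v, 2 ≤ G.degree v)
    (hsd : ¬ HasSemiDisjointCycle G) {F : Finset V} (hF : IsFVS G F)
    (hmin : ∀ F' : Finset V, F' ⊂ F → ¬ IsFVS G F') :
    ∑ v ∈ F, G.degree v + 2 * Fintype.card V ≤ 2 * #G.edgeFinset + #F := by
  have hcompl (u : V) : u ∈ Fᶜ ↔ u ∈ {u | u ∉ F} := Finset.mem_compl
  have hdegree : ∑ v ∈ F, G.degree v +
      ∑ C : (G.induce {u | u ∉ F}).ConnectedComponent, ∑ u ∈ componentVerts C, G.degree u =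
        2 * #G.edgeFinset := by
    rw [← sum_eq_sum_componentVerts hcompl, Finset.sum_add_sum_compl,
      sum_degrees_eq_twice_card_edges]
  have hcard : ∑ C : (G.induce {u | u ∉ F}).ConnectedComponent, #(componentVerts C) + #F =
      Fintype.card V := by
    rw [← Finset.card_compl_add_card F, Finset.card_eq_sum_ones Fᶜ,
      sum_eq_sum_componentVerts (G := G) hcompl]
    simp only [← Finset.card_eq_sum_ones]
  have hcover : #F ≤ ∑ C : (G.induce {u | u ∉ F}).ConnectedComponent,
      #{v ∈ F | 2 ≤ degIn G (componentVerts C) v} := by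
    refine (Finset.card_le_card fun v hv => ?_).trans Finset.card_biUnion_le
    obtain ⟨C, hC⟩ := exists_two_le_degIn_componentVerts hF hmin hv
    exact Finset.mem_biUnion.2 ⟨C, Finset.mem_univ C, Finset.mem_filter.2 ⟨hv, hC⟩⟩
  have hcomp (C : (G.induce {u | u ∉ F}).ConnectedComponent) :
      2 * #(componentVerts C) + #{v ∈ F | 2 ≤ degIn G (componentVerts C) v} ≤
        ∑ u ∈ componentVerts C, G.degree u := by
    refine le_trans ?_ (two_mul_card_add_card_le_sum_degree hdeg hsd
      (isTree_induce_componentVerts hF C))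
    gcongr
    intro v hv
    rw [Finset.mem_compl, mem_componentVerts]
    exact fun ⟨hvF, _⟩ => hvF hv
  have := Finset.sum_le_sum fun C (_ : C ∈ Finset.univ) => hcomp C
  rw [Finset.sum_add_distrib, ← Finset.mul_sum] at this
  omega

end FVS

namespace FVS

/-- if `G` has minimum degree at least `2` and no semi-disjoint cycles,
then every inclusion-wise minimal feedback vertex set `F` satisfies
`Σ_{v ∈ F} (d(v) - 1) ≤ 2 (|E| - |V|)`. -/
theorem stmt_5 {V : Type*} [Fintype V] (G : SimpleGraph V)
    (hdeg : ∀ v, 2 ≤ G.degree v) (hsd : ¬ HasSemiDisjointCycle G)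
    (F : Finset V) (hF : IsFVS G F)
    (hmin : ∀ F' : Finset V, F' ⊂ F → ¬ IsFVS G F') :
    ∑ v ∈ F, ((G.degree v : ℝ) - 1) ≤
      2 * ((G.edgeFinset.card : ℝ) - (Fintype.card V : ℝ)) := by
  have h : (∑ v ∈ F, G.degree v : ℝ) + 2 * Fintype.card V ≤ 2 * #G.edgeFinset + #F := by
    exact_mod_cast sum_degree_add_two_mul_card_le hdeg hsd hF hmin
  rw [Finset.sum_sub_distrib, Finset.sum_const, nsmul_eq_mul, mul_one]
  linarith

end FVS
end

section
/- Let G be a finite undirected graph that is not a pseudoforest, and let (x̄, ȳ) be a minimal extreme point of the orientation polyhedron P_orient(G) such that x̄_v < 1/3 for all vertices v. Then the support graph H(ȳ) — the bipartite graph on vertex set V(G) ∪ E(G) whose edges are the pairs {e, v} with v an endpoint of e and ȳ_{e,v} > 0 — is a forest. -/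
/- Common definitions for the polyhedral study of FVS / PFDS. -/

open scoped Classical
open Finset

/-!
A cycle of `H(y)` alternates between vertices and edges of `G`. Let `δ_{e,v} = ±1` record
the direction in which the cycle traverses the link `v — e`. At every edge node and at every
vertex node the cycle enters once and leaves once, so `δ` preserves the edge sums
`y_{e,u} + y_{e,v}` and the vertex loads `Σ_{e ∋ u} y_{e,u}`; it is supported where `y > 0`.
Hence `y + cδ` and `y - cδ` are both feasible for small `c > 0`, and `y` is their midpoint,
contradicting extremality.
-/

open Filter Topology

namespace SimpleGraph.Walk

variable {W : Type*} [DecidableEq W] {H : SimpleGraph W} {u v : W}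

noncomputable def netFlow (w : H.Walk u v) (a b : W) : ℝ :=
  (w.darts.map (·.toProd)).count (a, b) - (w.darts.map (·.toProd)).count (b, a)

lemma netFlow_swap (w : H.Walk u v) (a b : W) : w.netFlow b a = -w.netFlow a b := by
  simp only [netFlow, neg_sub]

lemma adj_of_netFlow_ne_zero (w : H.Walk u v) {a b : W} (h : w.netFlow a b ≠ 0) :
    H.Adj a b := by
  have hnot : ∀ {a b}, ¬H.Adj a b → (a, b) ∉ w.darts.map (·.toProd) := by
    intro a b hab hmem
    obtain ⟨⟨_, hadj⟩, -, rfl⟩ := List.mem_map.mp hmem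
    exact hab hadj
  by_contra hab
  simp [netFlow, List.count_eq_zero_of_not_mem (hnot hab),
    List.count_eq_zero_of_not_mem (hnot fun h' => hab h'.symm)] at h

lemma sum_netFlow [Fintype W] (w : H.Walk u v) (a : W) :
    ∑ b, w.netFlow a b = (if a = u then 1 else 0) - if a = v then 1 else 0 := by
  induction w with
  | nil => simp [netFlow]
  | cons h p ih =>
    simp only [netFlow, darts_cons, List.map_cons, List.count_cons, beq_iff_eq, Prod.mk.injEq,
      Nat.cast_add, Nat.cast_ite, Nat.cast_one, Nat.cast_zero, ite_and, Finset.sum_sub_distrib,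
      Finset.sum_add_distrib, Finset.sum_ite_eq, Finset.sum_ite_irrel, Finset.sum_const_zero,
      Finset.mem_univ, if_true] at ih ⊢
    split_ifs at ih ⊢ <;> grind

lemma IsTrail.netFlow_of_mem_darts {w : H.Walk u v} (hw : w.IsTrail) {d : H.Dart}
    (hd : d ∈ w.darts) : w.netFlow d.fst d.snd = 1 := by
  have hinj : ∀ d' ∈ w.darts, d'.edge = d.edge → d' = d := fun d' hd' he =>
    List.inj_on_of_nodup_map hw.edges_nodup hd' hd he
  have hnodup : (w.darts.map (·.toProd)).Nodup :=
    (List.Nodup.of_map _ hw.edges_nodup).map_on fun d₁ _ d₂ _ h => Dart.ext _ _ h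
  have hrev : (d.snd, d.fst) ∉ w.darts.map (·.toProd) := by
    intro hmem
    obtain ⟨d', hd', he⟩ := List.mem_map.mp hmem
    obtain rfl := hinj d' hd' (by simp [Dart.edge, he, Sym2.eq_swap])
    exact d'.adj.ne (congrArg Prod.snd he).symm
  simp [netFlow, List.count_eq_one_of_mem hnodup (List.mem_map_of_mem hd),
    List.count_eq_zero_of_not_mem hrev]

end SimpleGraph.Walk

lemma exists_pos_forall_nonneg_add_mul {ι : Type*} [Finite ι] {f g : ι → ℝ}
    (hf : ∀ i, 0 ≤ f i) (hg : ∀ i, g i ≠ 0 → 0 < f i) :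
    ∃ c > 0, ∀ i, 0 ≤ f i + c * g i ∧ 0 ≤ f i + -c * g i := by
  have hnear : ∀ᶠ t in 𝓝 (0 : ℝ), ∀ i, 0 ≤ f i + t * g i := by
    refine eventually_all.2 fun i => ?_
    rcases eq_or_ne (g i) 0 with hgi | hgi
    · simp [hgi, hf i]
    · have hlim : Tendsto (fun t : ℝ => f i + t * g i) (𝓝 0) (𝓝 (f i)) :=
        (continuous_const.add (continuous_id.mul continuous_const)).tendsto' 0 _ (by simp)
      exact (hlim.eventually_const_lt (hg i hgi)).mono fun _ => le_of_lt
  have hsymm := hnear.and ((continuous_neg.tendsto' 0 0 neg_zero).eventually hnear)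
  obtain ⟨c, hc, hpos⟩ := 
    ((hsymm.filter_mono (nhdsWithin_le_nhds (s := Set.Ioi 0))).and self_mem_nhdsWithin).exists
  exact ⟨c, hpos, fun i => ⟨hc.1 i, hc.2 i⟩⟩

namespace FVS

section

variable {V : Type*} [Fintype V] {G : SimpleGraph V} {x : V → ℝ} {y δ : Sym2 V → V → ℝ}

lemma supportGraph_adj_inl_inr {v : V} {e : Sym2 V} :
    (supportGraph G y).Adj (.inl v) (.inr e) ↔ e ∈ G.edgeSet ∧ v ∈ e ∧ 0 < y e v := by
  simp [supportGraph]

lemma supportGraph_not_adj_inl_inl (v v' : V) : ¬(supportGraph G y).Adj (.inl v) (.inl v') := by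
  simp [supportGraph]

lemma supportGraph_not_adj_inr_inr (e e' : Sym2 V) :
    ¬(supportGraph G y).Adj (.inr e) (.inr e') := by
  simp [supportGraph]

structure IsOrientBalanced (G : SimpleGraph V) (δ : Sym2 V → V → ℝ) : Prop where
  edge_sum : ∀ u v, G.Adj u v → δ s(u, v) u + δ s(u, v) v = 0
  load_sum : ∀ u, ∑ e ∈ G.edgeFinset.filter (fun e => u ∈ e), δ e u = 0
  eq_zero_of_not_incident : ∀ e u, ¬(e ∈ G.edgeSet ∧ u ∈ e) → δ e u = 0

lemma POrient.add_mul (hP : POrient G x y) (hδ : IsOrientBalanced G δ) (c : ℝ)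
    (hnn : ∀ e u, 0 ≤ y e u + c * δ e u) : POrient G x fun e u => y e u + c * δ e u := by
  obtain ⟨hedge, hload, hx, -, hzero⟩ := hP
  refine ⟨fun u v huv => ?_, fun u => ?_, hx, hnn, fun e u he => ?_⟩
  · linear_combination hedge u v huv - c * hδ.edge_sum u v huv
  · rw [Finset.sum_add_distrib, ← Finset.mul_sum, hδ.load_sum, mul_zero, add_zero]
    exact hload u
  · simp [hzero e u he, hδ.eq_zero_of_not_incident e u he]

lemma POrientExtreme.eq_zero_of_add_mul (hext : POrientExtreme G x y) {c : ℝ} (hc : c ≠ 0)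
    (h₁ : POrient G x fun e u => y e u + c * δ e u)
    (h₂ : POrient G x fun e u => y e u + -c * δ e u) : δ = 0 := by
  obtain ⟨-, hy⟩ := hext.2 x x _ _ (1 / 2) h₁ h₂ (by norm_num) (by norm_num)
    (fun v => by ring) (fun e u => by ring)
  ext e u
  have h := congrFun (congrFun hy e) u
  have : c * δ e u = 0 := by linarith
  simpa [hc] using this

lemma isOrientBalanced_netFlow {a : V ⊕ Sym2 V} (w : (supportGraph G y).Walk a a) :
    IsOrientBalanced G fun e v => w.netFlow (.inl v) (.inr e) := by
  have hsupp : ∀ e v, w.netFlow (.inl v) (.inr e) ≠ 0 → e ∈ G.edgeSet ∧ v ∈ e ∧ 0 < y e v :=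
    fun e v h => supportGraph_adj_inl_inr.1 (w.adj_of_netFlow_ne_zero h)
  have hzero : ∀ {b c}, ¬(supportGraph G y).Adj b c → w.netFlow b c = 0 :=
    fun h => not_imp_comm.1 w.adj_of_netFlow_ne_zero h
  have hcol : ∀ e, ∑ v, w.netFlow (.inl v) (.inr e) = 0 := fun e => by
    simpa [Fintype.sum_sum_type, hzero (supportGraph_not_adj_inr_inr _ _),
      w.netFlow_swap (.inr e)] using w.sum_netFlow (.inr e)
  have hrow : ∀ v, ∑ e, w.netFlow (.inl v) (.inr e) = 0 := fun v => by
    simpa [Fintype.sum_sum_type, hzero (supportGraph_not_adj_inl_inl _ _)]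
      using w.sum_netFlow (.inl v)
  refine ⟨fun u v huv => ?_, fun u => ?_, fun e u he => ?_⟩
  · refine (Fintype.sum_eq_add u v huv.ne fun z hz => ?_).symm.trans (hcol _)
    by_contra h
    have hz' : z ∈ s(u, v) := (hsupp _ _ h).2.1
    rw [Sym2.mem_iff] at hz'
    tauto
  · refine (Finset.sum_subset (Finset.subset_univ _) fun e _ he => ?_).trans (hrow u)
    by_contra h
    obtain ⟨he₁, he₂, -⟩ := hsupp _ _ h
    simp_all
  · by_contra h
    exact he ⟨(hsupp e u h).1, (hsupp e u h).2.1⟩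

lemma pos_of_netFlow_ne_zero {a : V ⊕ Sym2 V} (w : (supportGraph G y).Walk a a)
    {e : Sym2 V} {v : V} (h : w.netFlow (.inl v) (.inr e) ≠ 0) : 0 < y e v :=
  (supportGraph_adj_inl_inr.1 (w.adj_of_netFlow_ne_zero h)).2.2

lemma exists_netFlow_ne_zero_of_isCycle {a : V ⊕ Sym2 V} {w : (supportGraph G y).Walk a a}
    (hw : w.IsCycle) : ∃ e v, w.netFlow (.inl v) (.inr e) ≠ 0 := by
  obtain ⟨⟨⟨b, c⟩, hbc⟩, hd⟩ : ∃ d, d ∈ w.darts := ⟨_, w.firstDart_mem_darts hw.not_nil⟩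
  have h := hw.isTrail.netFlow_of_mem_darts hd
  rcases b with v | e <;> rcases c with v' | e'
  · exact absurd hbc (supportGraph_not_adj_inl_inl _ _)
  · exact ⟨e', v, by simp_all⟩
  · exact ⟨e, v', fun h0 => by simp [w.netFlow_swap (.inl v'), h0] at h⟩
  · exact absurd hbc (supportGraph_not_adj_inr_inr _ _)

end

theorem stmt_8_general {V : Type*} [Fintype V] (G : SimpleGraph V)
    (x : V → ℝ) (y : Sym2 V → V → ℝ)
    (hext : POrientExtreme G x y) :
    (supportGraph G y).IsAcyclic := by
  intro a w hw
  set δ : Sym2 V → V → ℝ := fun e v => w.netFlow (.inl v) (.inr e)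
  have hbal : IsOrientBalanced G δ := isOrientBalanced_netFlow w
  have hy : ∀ e v, 0 ≤ y e v := hext.1.2.2.2.1
  obtain ⟨c, hc, hnn⟩ := exists_pos_forall_nonneg_add_mul (f := fun p : Sym2 V × V => y p.1 p.2)
    (g := fun p => δ p.1 p.2) (fun p => hy p.1 p.2) (fun _ => pos_of_netFlow_ne_zero w)
  have hδ : δ = 0 := hext.eq_zero_of_add_mul hc.ne'
    (hext.1.add_mul hbal c fun e v => (hnn (e, v)).1)
    (hext.1.add_mul hbal (-c) fun e v => (hnn (e, v)).2)
  obtain ⟨e, v, hne⟩ := exists_netFlow_ne_zero_of_isCycle hw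
  exact hne (congrFun (congrFun hδ e) v)

/-- if `G` is not a pseudoforest and `(x, y)` is a minimal extreme point
of `P_orient(G)` with `x_v < 1/3` for all vertices `v`, then the support graph `H(y)`
is a forest. -/
theorem stmt_8 {V : Type*} [Fintype V] (G : SimpleGraph V)
    (hG : ¬ IsPseudoforest G) (x : V → ℝ) (y : Sym2 V → V → ℝ)
    (hext : POrientExtreme G x y) (hmin : POrientMinimal G x y)
    (hx : ∀ v, x v < 1 / 3) :
    (supportGraph G y).IsAcyclic :=
  stmt_8_general G x y hext

end FVS
end

section
/- Let G be a finite undirected graph that is not a pseudoforest, and let (x̄, ȳ) be a minimal extreme point of the orientation polyhedron P_orient(G) such that x̄_v < 1/3 for all vertices v. Then for every edge e = vw of G: ȳ_{e,v} > 0 or ȳ_{e,w} > 0 (or both), and x̄_v + x̄_w + ȳ_{e,v} + ȳ_{e,w} = 1. -/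
/- Common definitions for the polyhedral study of FVS / PFDS. -/

open scoped Classical
open Finset

namespace FVS

private lemma aux_decrease {V : Type*} [Fintype V] (G : SimpleGraph V)
    (x : V → ℝ) (y : Sym2 V → V → ℝ) (h : POrient G x y)
    (e : Sym2 V) (u : V) (hval : e ∈ G.edgeSet ∧ u ∈ e)
    (ε : ℝ) (hε0 : 0 < ε) (hεy : ε ≤ y e u)
    (hedge : ∀ a b, G.Adj a b → s(a, b) = e →
      1 + ε ≤ x a + x b + y e a + y e b) :
    POrient G x (fun e' u' => if e' = e ∧ u' = u then y e u - ε else y e' u') := by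
  obtain ⟨h1, h2, h3, h4, h5⟩ := h
  refine ⟨?_, ?_, h3, ?_, ?_⟩
  · intro a b hab
    by_cases hcase : s(a, b) = e
    · rw [hcase]
      have hs := hedge a b hab hcase
      dsimp only
      split_ifs with ha hb hb
      · exact absurd (ha.2.trans hb.2.symm) hab.ne
      · obtain ⟨-, rfl⟩ := ha; linarith
      · obtain ⟨-, rfl⟩ := hb; linarith
      · linarith
    · simp only [hcase, false_and, if_false]
      exact h1 a b hab
  · intro a
    have hsum : ∑ e' ∈ G.edgeFinset.filter (fun e' => a ∈ e'),
        (if e' = e ∧ a = u then y e u - ε else y e' a) ≤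
        ∑ e' ∈ G.edgeFinset.filter (fun e' => a ∈ e'), y e' a := by
      apply Finset.sum_le_sum
      intro e' _
      split_ifs with hc
      · rw [hc.1, ← hc.2]; linarith
      · exact le_refl _
    have := h2 a
    linarith
  · intro e' u'
    dsimp only
    split_ifs with hc
    · linarith [hεy]
    · exact h4 e' u'
  · intro e' u' hcond
    dsimp only
    split_ifs with hc
    · obtain ⟨he, hu⟩ := hc; subst he; subst hu; exact absurd hval hcond
    · exact h5 e' u' hcond

/-- if `G` is not a pseudoforest and `(x, y)` is a minimal extreme point
of `P_orient(G)` with `x_v < 1/3` for all vertices `v`, then for every edge `e = vw`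
of `G` we have `y_{e,v} > 0` or `y_{e,w} > 0`, and
`x_v + x_w + y_{e,v} + y_{e,w} = 1`. -/
theorem stmt_9 {V : Type*} [Fintype V] (G : SimpleGraph V)
    (hG : ¬ IsPseudoforest G) (x : V → ℝ) (y : Sym2 V → V → ℝ)
    (hext : POrientExtreme G x y) (hmin : POrientMinimal G x y)
    (hx : ∀ v, x v < 1 / 3) :
    ∀ v w : V, G.Adj v w →
      (0 < y s(v, w) v ∨ 0 < y s(v, w) w) ∧
      x v + x w + y s(v, w) v + y s(v, w) w = 1 := by
  intro v w hadj
  obtain ⟨h1, h2, h3, h4, h5⟩ := hext.1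
  have hedge := h1 v w hadj
  have hxv := hx v
  have hxw := hx w
  have hpos : 0 < y s(v, w) v ∨ 0 < y s(v, w) w := by
    by_contra hcon
    push_neg at hcon
    have hv := le_antisymm hcon.1 (h4 s(v, w) v)
    have hw := le_antisymm hcon.2 (h4 s(v, w) w)
    rw [hv, hw] at hedge
    linarith
  refine ⟨hpos, ?_⟩
  by_contra hne
  have hslack : 1 < x v + x w + y s(v, w) v + y s(v, w) w :=
    lt_of_le_of_ne hedge (fun h => hne h.symm)
  set δ := x v + x w + y s(v, w) v + y s(v, w) w - 1 with hδ
  have hδpos : 0 < δ := by simp [hδ]; linarith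
  have hmem : s(v, w) ∈ G.edgeSet := G.mem_edgeSet.mpr hadj
  have key : ∀ u : V, u ∈ s(v, w) → 0 < y s(v, w) u → False := by
    intro u hu hyu
    set ε := min (y s(v, w) u) δ with hε
    have hε0 : 0 < ε := lt_min hyu hδpos
    have hεy : ε ≤ y s(v, w) u := min_le_left _ _
    have hεδ : ε ≤ δ := min_le_right _ _
    have hfeas := aux_decrease G x y hext.1 s(v, w) u ⟨hmem, hu⟩ ε hε0 hεy ?_
    · exact hmin.2 s(v, w) u ε hε0 hfeas
    · intro a b hab hsab
      rw [Sym2.eq_iff] at hsab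
      rcases hsab with ⟨rfl, rfl⟩ | ⟨rfl, rfl⟩
      · linarith
      · linarith
  rcases hpos with hp | hp
  · exact key v (Sym2.mem_mk_left v w) hp
  · exact key w (Sym2.mem_mk_right v w) hp

end FVS
end
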